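/- arXiv:math/0410171 — 5 statements merged into one kernel-verified Lean document; each statement's English description precedes it below -/
import Mathlib

section
/- Let (M_n) be a square-integrable martingale with respect to a filtration (ℱ_n), with bracket ⟨M⟩_n = ∑_{k=0}^{n} E[(M_{k+1}-M_k)² | ℱ_k]. Then almost surely on the event {⟨M⟩_∞ < ∞}, M_n converges to a finite limit. -/
/-!
Fix `K ≥ 0` and let `τ` be the first time `⟨M⟩` exceeds `K`. Because `⟨M⟩_n` is already
`ℱ_n`-measurable, the events `{k < τ}` lie in `ℱ_k`, so `T_n = ∑_{k<n} 1_{k<τ} (M_{k+1} - M_k)`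
is again a martingale, its increments are orthogonal in `L²`, and
`E[T_n²] = E[∑_{k<n} 1_{k<τ} E[(M_{k+1} - M_k)² | ℱ_k]] ≤ K`. An `L²`-bounded martingale converges
almost surely, and on `{sup ⟨M⟩ ≤ K}` we have `T = M - M_0`. Letting `K` run through `ℕ` gives the
theorem.
-/

open MeasureTheory Filter

open Finset in
theorem Finset.sum_range_indicator_forall_sum_le {a : ℕ → ℝ} {K : ℝ} (hK : 0 ≤ K) (n : ℕ) :
    ∑ k ∈ range n, {k | ∀ j ≤ k, ∑ i ∈ range (j + 1), a i ≤ K}.indicator a k ≤ K := by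
  set S : Set ℕ := {k | ∀ j ≤ k, ∑ i ∈ range (j + 1), a i ≤ K}
  induction n with
  | zero => simpa using hK
  | succ n ih =>
    by_cases h : n ∈ S
    · have hall : ∀ k ∈ range (n + 1), S.indicator a k = a k := fun k hk =>
        Set.indicator_of_mem
          (show k ∈ S from fun j hj => h j (hj.trans (Nat.lt_succ_iff.mp (mem_range.mp hk)))) a
      rw [sum_congr rfl hall]
      exact h n le_rfl
    · rwa [sum_range_succ, Set.indicator_of_notMem h, add_zero]

namespace MeasureTheory

theorem MemLp.eLpNorm_one_le_sqrt_integral_sq {Ω : Type*} {m0 : MeasurableSpace Ω}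
    {μ : Measure Ω} [IsProbabilityMeasure μ] {f : Ω → ℝ} (hf : MemLp f 2 μ) :
    eLpNorm f 1 μ ≤ ENNReal.ofReal √(∫ ω, f ω ^ 2 ∂μ) := by
  refine (eLpNorm_le_eLpNorm_of_exponent_le one_le_two hf.aestronglyMeasurable).trans ?_
  rw [hf.eLpNorm_eq_integral_rpow_norm two_ne_zero ENNReal.ofNat_ne_top]
  simp only [ENNReal.toReal_ofNat, Real.rpow_two, Real.norm_eq_abs, sq_abs, Real.sqrt_eq_rpow,
    one_div, le_refl]

variable {Ω : Type*} {m0 : MeasurableSpace Ω}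

/-- The bracket `⟨M⟩_n = ∑_{k ≤ n} E[(M_{k+1} - M_k)² | ℱ_k]` in the indexing of the statement:
it includes the `n`-th increment, so it is the usual `⟨M⟩_{n+1}` and is `ℱ_n`-measurable. -/
noncomputable def predictableQuadVar (μ : Measure Ω) (ℱ : Filtration ℕ m0) (M : ℕ → Ω → ℝ)
    (n : ℕ) (ω : Ω) : ℝ :=
  ∑ k ∈ Finset.range (n + 1), (μ[fun ω' => (M (k + 1) ω' - M k ω') ^ 2 | ℱ k]) ω

variable {μ : Measure Ω} {ℱ : Filtration ℕ m0} {M : ℕ → Ω → ℝ}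

theorem stronglyAdapted_predictableQuadVar : StronglyAdapted ℱ (predictableQuadVar μ ℱ M) :=
  fun _ => Finset.stronglyMeasurable_fun_sum _ fun _ hk =>
    stronglyMeasurable_condExp.mono (ℱ.mono (Nat.lt_succ_iff.mp (Finset.mem_range.mp hk)))

theorem Submartingale.exists_ae_tendsto_of_integral_sq_le [IsProbabilityMeasure μ]
    {f : ℕ → Ω → ℝ} (hf : Submartingale f ℱ μ) (hf2 : ∀ n, MemLp (f n) 2 μ) {B : ℝ}
    (hB : ∀ n, ∫ ω, f n ω ^ 2 ∂μ ≤ B) :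
    ∀ᵐ ω ∂μ, ∃ c, Tendsto (fun n => f n ω) atTop (nhds c) :=
  hf.exists_ae_tendsto_of_bdd (R := (√B).toNNReal) fun n =>
    (hf2 n).eLpNorm_one_le_sqrt_integral_sq.trans
      (ENNReal.ofReal_le_ofReal (Real.sqrt_le_sqrt (hB n)))

namespace Martingale

variable [IsFiniteMeasure μ]

theorem condExp_sub_ae_eq_zero (hM : Martingale M ℱ μ) {i j : ℕ} (hij : i ≤ j) :
    μ[M j - M i | ℱ i] =ᵐ[μ] 0 := by
  filter_upwards [condExp_sub (hM.integrable j) (hM.integrable i) (ℱ i), hM.condExp_ae_eq hij]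
    with ω hsub hj
  rw [hsub, Pi.sub_apply, hj,
    condExp_of_stronglyMeasurable (ℱ.le i) (hM.stronglyAdapted i) (hM.integrable i),
    Pi.zero_apply, sub_self]

theorem integral_mul_sub_eq_zero (hM : Martingale M ℱ μ) {n : ℕ} {X : Ω → ℝ}
    (hX : StronglyMeasurable[ℱ n] X) (hXM : Integrable (X * (M (n + 1) - M n)) μ) :
    ∫ ω, X ω * (M (n + 1) ω - M n ω) ∂μ = 0 := by
  have hΔ : Integrable (M (n + 1) - M n) μ := (hM.integrable _).sub (hM.integrable _)
  calc ∫ ω, X ω * (M (n + 1) ω - M n ω) ∂μ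
      = ∫ ω, (μ[X * (M (n + 1) - M n) | ℱ n]) ω ∂μ := (integral_condExp (ℱ.le n)).symm
    _ = ∫ _, (0 : ℝ) ∂μ := by
      refine integral_congr_ae ((condExp_mul_of_stronglyMeasurable_left hX hXM hΔ).trans ?_)
      filter_upwards [hM.condExp_sub_ae_eq_zero n.le_succ] with ω hω
      rw [Pi.mul_apply, hω, Pi.zero_apply, mul_zero]
    _ = 0 := integral_zero _ _

theorem integral_sq_eq_add_sum (hM : Martingale M ℱ μ) (hM2 : ∀ n, MemLp (M n) 2 μ) (n : ℕ) :
    ∫ ω, M n ω ^ 2 ∂μ =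
      ∫ ω, M 0 ω ^ 2 ∂μ + ∑ k ∈ Finset.range n, ∫ ω, (M (k + 1) ω - M k ω) ^ 2 ∂μ := by
  induction n with
  | zero => simp
  | succ n ih =>
    have hΔ2 : MemLp (M (n + 1) - M n) 2 μ := (hM2 _).sub (hM2 _)
    have hcross : Integrable (fun ω => M n ω * (M (n + 1) ω - M n ω)) μ :=
      (hM2 n).integrable_mul hΔ2
    have hsq : Integrable (fun ω => (M (n + 1) ω - M n ω) ^ 2) μ := hΔ2.integrable_sq
    have hrest : Integrable
        (fun ω => 2 * (M n ω * (M (n + 1) ω - M n ω)) + (M (n + 1) ω - M n ω) ^ 2) μ :=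
      (hcross.const_mul 2).add hsq
    have hexpand : (fun ω => M (n + 1) ω ^ 2) = fun ω =>
        M n ω ^ 2 + (2 * (M n ω * (M (n + 1) ω - M n ω)) + (M (n + 1) ω - M n ω) ^ 2) := by
      funext ω; ring
    rw [hexpand, integral_add (hM2 n).integrable_sq hrest,
      integral_add (hcross.const_mul 2) hsq, integral_const_mul,
      hM.integral_mul_sub_eq_zero (hM.stronglyAdapted n) hcross, ih, Finset.sum_range_succ]
    ring

theorem sum_indicator_sub (hM : Martingale M ℱ μ) {G : ℕ → Set Ω}
    (hG : ∀ k, MeasurableSet[ℱ k] (G k)) :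
    Martingale (fun n => ∑ k ∈ Finset.range n, (G k).indicator (M (k + 1) - M k)) ℱ μ := by
  set ξ : ℕ → Ω → ℝ := fun k => (G k).indicator 1
  have hξ : StronglyAdapted ℱ ξ := fun k => stronglyMeasurable_const.indicator (hG k)
  have hξ_le : ∀ k ω, ξ k ω ≤ 1 := fun k ω =>
    Set.indicator_apply_le' (fun _ => le_rfl) fun _ => zero_le_one
  have hξ_nonneg : ∀ k ω, 0 ≤ ξ k ω := fun k => Set.indicator_nonneg fun _ _ => zero_le_one
  have hξ_mul : ∀ (k : ℕ) (f : Ω → ℝ), ξ k * f = (G k).indicator f := fun k f => by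
    funext ω; by_cases h : ω ∈ G k <;> simp [ξ, h]
  have htransform : (fun n => ∑ k ∈ Finset.range n, ξ k * (M (k + 1) - M k)) =
      fun n => ∑ k ∈ Finset.range n, (G k).indicator (M (k + 1) - M k) := by
    simp only [hξ_mul]
  have hneg : -(fun n => ∑ k ∈ Finset.range n, ξ k * ((-M) (k + 1) - (-M) k)) =
      fun n => ∑ k ∈ Finset.range n, ξ k * (M (k + 1) - M k) := by
    funext n
    simp only [Pi.neg_apply, ← neg_sub', mul_neg, Finset.sum_neg_distrib, neg_neg]
  rw [← htransform]
  exact martingale_iff.2 ⟨hneg ▸ (hM.neg.submartingale.sum_mul_sub hξ hξ_le hξ_nonneg).neg,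
    hM.submartingale.sum_mul_sub hξ hξ_le hξ_nonneg⟩

theorem integral_sq_sum_indicator_sub (hM : Martingale M ℱ μ) (hM2 : ∀ n, MemLp (M n) 2 μ)
    {G : ℕ → Set Ω} (hG : ∀ k, MeasurableSet[ℱ k] (G k)) (n : ℕ) :
    ∫ ω, (∑ k ∈ Finset.range n, (G k).indicator (M (k + 1) - M k)) ω ^ 2 ∂μ =
      ∑ k ∈ Finset.range n, ∫ ω in G k, (μ[fun ω => (M (k + 1) ω - M k ω) ^ 2 | ℱ k]) ω ∂μ := by
  set T : ℕ → Ω → ℝ := fun n => ∑ k ∈ Finset.range n, (G k).indicator (M (k + 1) - M k)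
  have hT2 : ∀ n, MemLp (T n) 2 μ := fun n =>
    memLp_finsetSum' _ fun k _ => ((hM2 _).sub (hM2 _)).indicator (ℱ.le k _ (hG k))
  rw [(hM.sum_indicator_sub hG).integral_sq_eq_add_sum hT2 n]
  simp only [Finset.sum_range_succ, Finset.range_zero, Finset.sum_empty, Pi.add_apply,
    Pi.zero_apply, add_sub_cancel_left, zero_pow two_ne_zero, integral_zero, zero_add]
  refine Finset.sum_congr rfl fun k _ => ?_
  have hsq : (fun ω => (G k).indicator (M (k + 1) - M k) ω ^ 2) =
      (G k).indicator fun ω => (M (k + 1) ω - M k ω) ^ 2 := by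
    funext ω; by_cases h : ω ∈ G k <;> simp [h]
  have hint : Integrable (fun ω => (M (k + 1) ω - M k ω) ^ 2) μ :=
    ((hM2 _).sub (hM2 _)).integrable_sq
  rw [hsq, integral_indicator (ℱ.le k _ (hG k)), setIntegral_condExp (ℱ.le k) hint (hG k)]

end Martingale

theorem Martingale.ae_exists_tendsto_of_predictableQuadVar_le [IsProbabilityMeasure μ]
    (hM : Martingale M ℱ μ) (hM2 : ∀ n, MemLp (M n) 2 μ) {K : ℝ} (hK : 0 ≤ K) :
    ∀ᵐ ω ∂μ, (∀ n, predictableQuadVar μ ℱ M n ω ≤ K) →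
      ∃ c, Tendsto (fun n => M n ω) atTop (nhds c) := by
  -- `G k = {k < τ}` with `τ` the first time `⟨M⟩` exceeds `K`, so `T` below is `M` stopped at `τ`,
  -- minus `M 0`.
  set G : ℕ → Set Ω := fun k => {ω | ∀ j ≤ k, predictableQuadVar μ ℱ M j ω ≤ K}
  have hG : ∀ k, MeasurableSet[ℱ k] (G k) := fun k => by
    simp only [G, Set.ofPred_forall]
    exact .iInter fun j => .iInter fun hj => measurableSet_le
      (stronglyAdapted_predictableQuadVar.stronglyMeasurable_le hj).measurable measurable_const
  set T : ℕ → Ω → ℝ := fun n => ∑ k ∈ Finset.range n, (G k).indicator (M (k + 1) - M k)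
  have hT2 : ∀ n, MemLp (T n) 2 μ := fun n =>
    memLp_finsetSum' _ fun k _ => ((hM2 _).sub (hM2 _)).indicator (ℱ.le k _ (hG k))
  have hL2 : ∀ n, ∫ ω, T n ω ^ 2 ∂μ ≤ K := fun n => by
    set e : ℕ → Ω → ℝ := fun k => μ[fun ω => (M (k + 1) ω - M k ω) ^ 2 | ℱ k]
    have he : ∀ k, Integrable ((G k).indicator (e k)) μ := fun k =>
      integrable_condExp.indicator (ℱ.le k _ (hG k))
    calc ∫ ω, T n ω ^ 2 ∂μ = ∫ ω, ∑ k ∈ Finset.range n, (G k).indicator (e k) ω ∂μ := by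
          rw [hM.integral_sq_sum_indicator_sub hM2 hG n, integral_finsetSum _ fun k _ => he k]
          exact Finset.sum_congr rfl fun k _ => (integral_indicator (ℱ.le k _ (hG k))).symm
      _ ≤ ∫ _, K ∂μ := integral_mono (integrable_finsetSum _ fun k _ => he k) (integrable_const K)
          fun ω => Finset.sum_range_indicator_forall_sum_le hK n
      _ = K := by simp
  filter_upwards
    [(hM.sum_indicator_sub hG).submartingale.exists_ae_tendsto_of_integral_sq_le hT2 hL2]
    with ω ⟨c, hc⟩ hbdd
  have hTM : ∀ n, T n ω + M 0 ω = M n ω := fun n => by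
    have hmem : ∀ k, ω ∈ G k := fun k j _ => hbdd j
    simp only [T, Finset.sum_apply, Set.indicator_of_mem (hmem _), Pi.sub_apply,
      Finset.sum_range_sub (fun k => M k ω), sub_add_cancel]
  exact ⟨c + M 0 ω, (hc.add_const _).congr hTM⟩

end MeasureTheory

/-- Doob: a square-integrable martingale converges a.s. on the event where its
predictable quadratic variation `⟨M⟩_∞` is finite. -/
theorem martingale_converges_on_bracket_finite
    {Ω : Type*} {m0 : MeasurableSpace Ω} (μ : Measure Ω) [IsProbabilityMeasure μ]
    (ℱ : Filtration ℕ m0) (M : ℕ → Ω → ℝ)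
    (hM : Martingale M ℱ μ) (hM2 : ∀ n, MemLp (M n) 2 μ) :
    ∀ᵐ ω ∂μ,
      BddAbove (Set.range fun n : ℕ =>
        ∑ k ∈ Finset.range (n + 1),
          (μ[(fun ω' => (M (k + 1) ω' - M k ω') ^ 2) | ℱ k]) ω) →
      ∃ c : ℝ, Tendsto (fun n => M n ω) atTop (nhds c) := by
  filter_upwards [ae_all_iff.2 fun K : ℕ =>
    hM.ae_exists_tendsto_of_predictableQuadVar_le hM2 K.cast_nonneg] with ω hω ⟨b, hb⟩
  exact hω ⌈b⌉₊ fun n => (hb (Set.mem_range_self n)).trans (Nat.le_ceil b)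
end

section
/- Let (𝒢_n) be a filtration, (γ_n) a 𝒢_n-adapted real sequence with liminf γ_n > 0 a.s., and (Γ_n)_{n≥1} adapted events. Define τ_n = sup{k ≤ n : Γ_k holds}. Then almost surely on the event {∃ a > 0, m ∈ ℕ such that for all n ≥ m, P(Γ_{n+1} | 𝒢_n) ≤ a τ_n^{γ_{τ_n}} / n^{1+γ_{τ_n}}}, only finitely many of the events Γ_n occur. -/
open MeasureTheory Filter Set
open scoped Topology

/-- Time of the last occurrence of one of the events `Γ_0, …, Γ_n` at `ω`
(junk value `0` via `sSup ∅ = 0` if none occurred). -/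
noncomputable def lastOcc {Ω : Type*} (Γ : ℕ → Set Ω) (n : ℕ) (ω : Ω) : ℕ :=
  sSup {k : ℕ | k ≤ n ∧ ω ∈ Γ k}

namespace TarresA2

/-! ### Elementary real analysis lemmas -/

lemma exp_neg_two_le {x : ℝ} (hx0 : 0 ≤ x) (hx : x ≤ 1/2) : Real.exp (-(2*x)) ≤ 1 - x := by
  have h1 : 2*x + 1 ≤ Real.exp (2*x) := Real.add_one_le_exp (2*x)
  have h2 : (0:ℝ) < 1 + 2*x := by linarith
  have h3 : Real.exp (-(2*x)) = (Real.exp (2*x))⁻¹ := by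
    rw [Real.exp_neg]
  rw [h3]
  have h4 : (Real.exp (2*x))⁻¹ ≤ (1 + 2*x)⁻¹ := by
    apply inv_anti₀ h2
    linarith
  have h5 : (1 + 2*x)⁻¹ ≤ 1 - x := by
    rw [inv_le_iff_one_le_mul₀ h2]
    nlinarith
  linarith

lemma rpow_sub_rpow_ge {c r : ℝ} (hc : 0 < c) (hr0 : 0 < r) (hr1 : r ≤ 1) :
    1 + c * (1 - r) ≤ r ^ (-c) := by
  have hlog : Real.log r ≤ r - 1 := Real.log_le_sub_one_of_pos hr0
  have : r ^ (-c) = Real.exp (Real.log r * (-c)) := Real.rpow_def_of_pos hr0 _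
  rw [this]
  have h1 : c * (1 - r) + 1 ≤ Real.exp (c * (1-r)) := Real.add_one_le_exp _
  have h2 : Real.exp (c * (1-r)) ≤ Real.exp (Real.log r * (-c)) := by
    apply Real.exp_le_exp.mpr
    nlinarith
  linarith

lemma rpow_tele {c x : ℝ} (hc : 0 < c) (hx : 1 ≤ x) :
    (x+1) ^ (-(1+c)) ≤ (1/c) * (x ^ (-c) - (x+1) ^ (-c)) := by
  have hx1 : (0:ℝ) < x + 1 := by linarith
  have hr0 : 0 < x / (x+1) := by positivity
  have hr1 : x / (x+1) ≤ 1 := by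
    rw [div_le_one hx1]; linarith
  have key := rpow_sub_rpow_ge hc hr0 hr1
  have hdiv : (x / (x+1)) ^ (-c) = x ^ (-c) / (x+1) ^ (-c) :=
    Real.div_rpow (by linarith) (le_of_lt hx1) _
  have hpow_pos : (0:ℝ) < (x+1) ^ (-c) := Real.rpow_pos_of_pos hx1 _
  have h2 : (x+1) ^ (-c) * (1 + c * (1 - x/(x+1))) ≤ x ^ (-c) := by
    rw [hdiv] at key
    calc (x+1) ^ (-c) * (1 + c * (1 - x/(x+1)))
        ≤ (x+1) ^ (-c) * (x ^ (-c) / (x+1) ^ (-c)) := by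
          apply mul_le_mul_of_nonneg_left key (le_of_lt hpow_pos)
      _ = x ^ (-c) := by field_simp
  have h3 : 1 - x/(x+1) = 1/(x+1) := by field_simp; ring
  rw [h3] at h2
  have h4 : (x+1) ^ (-(1+c)) = (x+1)^(-c) * (1/(x+1)) := by
    rw [show -(1+c) = -c + (-1) by ring, Real.rpow_add hx1, Real.rpow_neg_one]
    ring
  rw [h4]
  have h5 : c * ((x+1) ^ (-c) * (1/(x+1))) ≤ x ^ (-c) - (x+1) ^ (-c) := by nlinarith
  calc (x+1) ^ (-c) * (1/(x+1)) = (1/c) * (c * ((x+1) ^ (-c) * (1/(x+1)))) := by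
        field_simp
    _ ≤ (1/c) * (x ^ (-c) - (x+1) ^ (-c)) := by
        apply mul_le_mul_of_nonneg_left h5 (by positivity)

lemma sum_rpow_le {c : ℝ} (hc : 0 < c) {t : ℕ} (ht : 2 ≤ t) (N : ℕ) :
    ∑ k ∈ Finset.Ico t N, ((k:ℝ)) ^ (-(1+c)) ≤ (1/c) * ((t:ℝ)-1) ^ (-c) := by
  have ht1 : (1:ℝ) ≤ (t:ℝ) - 1 := by
    have : (2:ℝ) ≤ (t:ℝ) := by exact_mod_cast ht
    linarith
  have main : ∀ M : ℕ, ∑ k ∈ Finset.Ico t (t + M), ((k:ℝ)) ^ (-(1+c)) ≤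
      (1/c) * (((t:ℝ)-1) ^ (-c) - ((t+M:ℝ)-1) ^ (-c)) := by
    intro M
    induction M with
    | zero => simp
    | succ M ih =>
      rw [show t + (M+1) = (t + M) + 1 by ring, Finset.sum_Ico_succ_top (Nat.le_add_right t M)]
      have hx : (1:ℝ) ≤ ((t+M:ℝ) - 1) := by
        push_cast; linarith [Nat.cast_nonneg (α := ℝ) M]
      have tele := rpow_tele hc hx
      have hrw : ((t+M:ℝ) - 1) + 1 = ((t+M:ℕ):ℝ) := by push_cast; ring
      rw [hrw] at tele
      push_cast at ih tele ⊢
      have e : (t:ℝ) + (↑M+1) - 1 = ↑t + ↑M := by ring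
      rw [e]
      linarith
  rcases le_or_gt N t with h | h
  · rw [Finset.Ico_eq_empty (by omega)]
    simp only [Finset.sum_empty]
    positivity
  · obtain ⟨M, rfl⟩ : ∃ M, N = t + M := ⟨N - t, by omega⟩
    have := main M
    have hpos : (0:ℝ) ≤ ((t+M:ℝ) - 1) ^ (-c) := by
      apply Real.rpow_nonneg; push_cast; linarith [Nat.cast_nonneg (α := ℝ) M]
    nlinarith [hpos, mul_nonneg (le_of_lt (one_div_pos.mpr hc)) hpos]

/-! ### The constants -/

noncomputable def cc (j : ℕ) : ℝ := 1/(j+1)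

lemma cc_pos (j : ℕ) : 0 < cc j := by
  unfold cc; positivity

lemma cc_le_one (j : ℕ) : cc j ≤ 1 := by
  unfold cc
  rw [div_le_one (by positivity)]
  linarith [Nat.cast_nonneg (α := ℝ) j]

noncomputable def qq (a j t k : ℕ) : ℝ := a * (t:ℝ) ^ (cc j) * (k:ℝ) ^ (-(1 + cc j))

noncomputable def dd (a j : ℕ) : ℝ := Real.exp (-(4*(a:ℝ)*(j+1)))

lemma dd_pos (a j : ℕ) : 0 < dd a j := Real.exp_pos _

lemma qq_nonneg (a j t k : ℕ) : 0 ≤ qq a j t k := by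
  unfold qq
  have h1 : (0:ℝ) ≤ (t:ℝ) ^ (cc j) := Real.rpow_nonneg (Nat.cast_nonneg t) _
  have h2 : (0:ℝ) ≤ (k:ℝ) ^ (-(1 + cc j)) := Real.rpow_nonneg (Nat.cast_nonneg k) _
  positivity

lemma qq_le_half {a j t k : ℕ} (ht2 : 2 ≤ t) (hta : 2*a ≤ t) (htk : t ≤ k) :
    qq a j t k ≤ 1/2 := by
  have hk0 : (0:ℝ) < (k:ℝ) := by
    have : 0 < k := by omega
    exact_mod_cast this
  have ht0 : (0:ℝ) < (t:ℝ) := by positivity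
  have h1 : (t:ℝ) ^ (cc j) ≤ (k:ℝ) ^ (cc j) :=
    Real.rpow_le_rpow (le_of_lt ht0) (by exact_mod_cast htk) (le_of_lt (cc_pos j))
  have h2 : (k:ℝ) ^ (cc j) * (k:ℝ) ^ (-(1 + cc j)) = (k:ℝ)⁻¹ := by
    rw [← Real.rpow_add hk0, ← Real.rpow_neg_one (k:ℝ)]
    norm_num
  have h3 : qq a j t k ≤ (a:ℝ) * (k:ℝ)⁻¹ := by
    unfold qq
    rw [mul_assoc, ← h2]
    have h4 : (0:ℝ) ≤ (k:ℝ) ^ (-(1 + cc j)) := Real.rpow_nonneg (le_of_lt hk0) _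
    have := mul_le_mul_of_nonneg_right h1 h4
    have ha0 : (0:ℝ) ≤ (a:ℝ) := Nat.cast_nonneg a
    nlinarith
  have h5 : (a:ℝ) * (k:ℝ)⁻¹ ≤ 1/2 := by
    rw [mul_inv_le_iff₀ hk0]
    have : (2:ℝ)*(a:ℝ) ≤ (k:ℝ) := by
      have : 2*a ≤ k := le_trans hta htk
      exact_mod_cast this
    linarith
  linarith

lemma one_sub_qq_pos {a j t k : ℕ} (ht2 : 2 ≤ t) (hta : 2*a ≤ t) (htk : t ≤ k) :
    (0:ℝ) < 1 - qq a j t k := by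
  have := qq_le_half (a := a) (j := j) ht2 hta htk
  linarith

lemma sum_qq_le {a j t : ℕ} (ht2 : 2 ≤ t) (N : ℕ) :
    ∑ k ∈ Finset.Ico t N, qq a j t k ≤ 2*(a:ℝ)*(j+1) := by
  have hc := cc_pos j
  have hsum := sum_rpow_le hc ht2 N
  have ht1 : (1:ℝ) ≤ (t:ℝ) - 1 := by
    have : (2:ℝ) ≤ (t:ℝ) := by exact_mod_cast ht2
    linarith
  have ht0 : (0:ℝ) < (t:ℝ) := by linarith
  unfold qq
  rw [← Finset.mul_sum]
  have h1 : (t:ℝ) ^ (cc j) * ((t:ℝ)-1) ^ (-(cc j)) ≤ 2 := by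
    rw [Real.rpow_neg (by linarith : (0:ℝ) ≤ (t:ℝ)-1), ← div_eq_mul_inv,
      ← Real.div_rpow (le_of_lt ht0) (by linarith)]
    calc ((t:ℝ)/((t:ℝ)-1)) ^ (cc j) ≤ (2:ℝ) ^ (cc j) := by
          apply Real.rpow_le_rpow (by positivity) _ (le_of_lt hc)
          rw [div_le_iff₀ (by linarith)]
          linarith
      _ ≤ (2:ℝ) ^ (1:ℝ) := by
          apply Real.rpow_le_rpow_of_exponent_le (by norm_num) (cc_le_one j)
      _ = 2 := by norm_num
  have hnn : (0:ℝ) ≤ (a:ℝ) * (t:ℝ) ^ (cc j) := by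
    have := Real.rpow_nonneg (le_of_lt ht0) (cc j)
    positivity
  have step1 := mul_le_mul_of_nonneg_left hsum hnn
  have hinv : 1/(cc j) = (j:ℝ)+1 := by
    unfold cc; rw [one_div_one_div]
  have h2 : ((a:ℝ) * (t:ℝ) ^ (cc j)) * ((1/cc j) * ((t:ℝ)-1) ^ (-(cc j)))
      ≤ 2*(a:ℝ)*((j:ℝ)+1) := by
    have ha0 : (0:ℝ) ≤ (a:ℝ) := Nat.cast_nonneg a
    have hj1 : (0:ℝ) < (j:ℝ)+1 := by positivity
    calc ((a:ℝ) * (t:ℝ) ^ (cc j)) * ((1/cc j) * ((t:ℝ)-1) ^ (-(cc j)))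
        = ((a:ℝ) * (1/cc j)) * ((t:ℝ) ^ (cc j) * ((t:ℝ)-1) ^ (-(cc j))) := by ring
      _ ≤ ((a:ℝ) * (1/cc j)) * 2 := by
          apply mul_le_mul_of_nonneg_left h1
          rw [hinv]; positivity
      _ = 2*(a:ℝ)*((j:ℝ)+1) := by rw [hinv]; ring
  calc (a:ℝ) * (t:ℝ) ^ (cc j) * ∑ k ∈ Finset.Ico t N, (k:ℝ) ^ (-(1 + cc j))
      ≤ ((a:ℝ) * (t:ℝ) ^ (cc j)) * ((1/cc j) * ((t:ℝ)-1) ^ (-(cc j))) := step1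
    _ ≤ 2*(a:ℝ)*((j:ℝ)+1) := h2

lemma prod_one_sub_qq {a j t : ℕ} (ht2 : 2 ≤ t) (hta : 2*a ≤ t) (N : ℕ) :
    dd a j ≤ ∏ k ∈ Finset.Ico t N, (1 - qq a j t k) := by
  have h1 : Real.exp (∑ k ∈ Finset.Ico t N, (-(2 * qq a j t k)))
      ≤ ∏ k ∈ Finset.Ico t N, (1 - qq a j t k) := by
    rw [Real.exp_sum]
    apply Finset.prod_le_prod
    · intro k _; exact le_of_lt (Real.exp_pos _)
    · intro k hk
      rw [Finset.mem_Ico] at hk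
      have := exp_neg_two_le (qq_nonneg a j t k) (qq_le_half ht2 hta hk.1)
      simpa using this
  refine le_trans ?_ h1
  unfold dd
  apply Real.exp_le_exp.mpr
  have h2 : ∑ k ∈ Finset.Ico t N, (-(2 * qq a j t k))
      = -(2 * ∑ k ∈ Finset.Ico t N, qq a j t k) := by
    rw [Finset.mul_sum, ← Finset.sum_neg_distrib]
  rw [h2]
  have := sum_qq_le (a := a) (j := j) ht2 N
  linarith

/-! ### lastOcc lemmas -/

variable {Ω : Type*}

lemma lastOcc_bddAbove (Γ : ℕ → Set Ω) (n : ℕ) (ω : Ω) :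
    BddAbove {k : ℕ | k ≤ n ∧ ω ∈ Γ k} :=
  ⟨n, fun _ hx => hx.1⟩

lemma lastOcc_le (Γ : ℕ → Set Ω) (n : ℕ) (ω : Ω) : lastOcc Γ n ω ≤ n := by
  unfold lastOcc
  rcases Set.eq_empty_or_nonempty {k : ℕ | k ≤ n ∧ ω ∈ Γ k} with h | h
  · rw [h, csSup_empty]; exact Nat.zero_le n
  · exact csSup_le h (fun x hx => hx.1)

lemma lastOcc_eq_of (Γ : ℕ → Set Ω) {t n : ℕ} {ω : Ω} (h1 : ω ∈ Γ t) (h2 : t ≤ n)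
    (h3 : ∀ j, t < j → j ≤ n → ω ∉ Γ j) : lastOcc Γ n ω = t := by
  unfold lastOcc
  apply le_antisymm
  · refine csSup_le ⟨t, h2, h1⟩ ?_
    intro b hb
    by_contra hbt
    exact h3 b (by omega) hb.1 hb.2
  · exact le_csSup (lastOcc_bddAbove Γ n ω) ⟨h2, h1⟩

lemma mem_of_lastOcc_pos (Γ : ℕ → Set Ω) {n : ℕ} {ω : Ω} (h : lastOcc Γ n ω ≠ 0) :
    ω ∈ Γ (lastOcc Γ n ω) := by
  have hne : {k : ℕ | k ≤ n ∧ ω ∈ Γ k}.Nonempty := by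
    by_contra hc
    rw [Set.not_nonempty_iff_eq_empty] at hc
    apply h
    unfold lastOcc
    rw [hc, csSup_empty]
    rfl
  exact (Nat.sSup_mem hne (lastOcc_bddAbove Γ n ω)).2

lemma not_mem_of_lt_of_lastOcc_lt (Γ : ℕ → Set Ω) {n k : ℕ} {ω : Ω}
    (h : lastOcc Γ n ω < k) (hk : k ≤ n) : ω ∉ Γ k := by
  intro hmem
  have : k ≤ lastOcc Γ n ω := le_csSup (lastOcc_bddAbove Γ n ω) ⟨hk, hmem⟩
  omega

lemma lastOcc_level_set (Γ : ℕ → Set Ω) {m0 : MeasurableSpace Ω} (𝒢 : Filtration ℕ m0)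
    (hΓ : ∀ n, MeasurableSet[𝒢 n] (Γ n)) (n k : ℕ) :
    MeasurableSet[𝒢 n] {ω | lastOcc Γ n ω = k} := by
  by_cases hk : k ≤ n
  · by_cases hk0 : k = 0
    · subst hk0
      have : {ω | lastOcc Γ n ω = 0} = ⋂ j ∈ Finset.Ioc 0 n, (Γ j)ᶜ := by
        ext ω
        simp only [Set.mem_setOf_eq, Set.mem_iInter, Finset.mem_Ioc, Set.mem_compl_iff]
        constructor
        · intro h j hj
          exact not_mem_of_lt_of_lastOcc_lt Γ (h ▸ hj.1) hj.2
        · intro h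
          rcases Nat.eq_zero_or_pos (lastOcc Γ n ω) with h0 | h0
          · exact h0
          · exfalso
            have hmem := mem_of_lastOcc_pos Γ (Nat.pos_iff_ne_zero.mp h0)
            exact h _ ⟨h0, lastOcc_le Γ n ω⟩ hmem
      rw [this]
      exact MeasurableSet.biInter (Finset.countable_toSet _)
        (fun j hj => ((𝒢.mono (Finset.mem_Ioc.mp hj).2) _ (hΓ j)).compl)
    · have : {ω | lastOcc Γ n ω = k} = (Γ k) ∩ ⋂ j ∈ Finset.Ioc k n, (Γ j)ᶜ := by
        ext ω
        simp only [Set.mem_setOf_eq, Set.mem_inter_iff, Set.mem_iInter, Finset.mem_Ioc,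
          Set.mem_compl_iff]
        constructor
        · intro h
          refine ⟨h ▸ mem_of_lastOcc_pos Γ (h ▸ hk0), fun j hj => ?_⟩
          exact not_mem_of_lt_of_lastOcc_lt Γ (h ▸ hj.1) hj.2
        · intro ⟨h1, h2⟩
          exact lastOcc_eq_of Γ h1 hk (fun j hj1 hj2 => h2 j ⟨hj1, hj2⟩)
      rw [this]
      exact ((𝒢.mono hk) _ (hΓ k)).inter
        (MeasurableSet.biInter (Finset.countable_toSet _)
          (fun j hj => ((𝒢.mono (Finset.mem_Ioc.mp hj).2) _ (hΓ j)).compl))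
  · have : {ω | lastOcc Γ n ω = k} = ∅ := by
      ext ω
      simp only [Set.mem_setOf_eq, Set.mem_empty_iff_false, iff_false]
      intro h
      exact hk (h ▸ lastOcc_le Γ n ω)
    rw [this]
    exact @MeasurableSet.empty Ω (𝒢 n)

/-! ### The bound function `pB` and its measurability -/

/-- measurability of a constant-base rpow -/
lemma measurable_const_rpow {m : MeasurableSpace Ω} {g : Ω → ℝ} (hg : Measurable[m] g) (x : ℝ)
    (hx : 0 ≤ x) : Measurable[m] fun ω => x ^ g ω := by
  rcases eq_or_lt_of_le hx with h | h
  · have : (fun ω => x ^ g ω) = fun ω => if g ω = 0 then (1:ℝ) else 0 := by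
      funext ω
      rcases eq_or_ne (g ω) 0 with h0 | h0
      · simp [h0, Real.rpow_zero]
      · simp [h0, ← h, Real.zero_rpow h0]
    rw [this]
    exact Measurable.ite (hg (measurableSet_singleton 0)) measurable_const measurable_const
  · have : (fun ω => x ^ g ω) = fun ω => Real.exp (Real.log x * g ω) := by
      funext ω; exact Real.rpow_def_of_pos h _
    rw [this]
    exact Real.measurable_exp.comp (hg.const_mul _)

/-- The bound function appearing in the statement, with a natural-number coefficient. -/
noncomputable def pB (γ : ℕ → Ω → ℝ) (Γ : ℕ → Set Ω) (a : ℕ) (n : ℕ) (ω : Ω) : ℝ :=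
  (a:ℝ) * (lastOcc Γ n ω : ℝ) ^ (γ (lastOcc Γ n ω) ω) / (n : ℝ) ^ (1 + γ (lastOcc Γ n ω) ω)

lemma pB_nonneg (γ : ℕ → Ω → ℝ) (Γ : ℕ → Set Ω) (a : ℕ) (n : ℕ) (ω : Ω) :
    0 ≤ pB γ Γ a n ω := by
  unfold pB
  have h1 : (0:ℝ) ≤ (lastOcc Γ n ω : ℝ) ^ (γ (lastOcc Γ n ω) ω) :=
    Real.rpow_nonneg (Nat.cast_nonneg _) _
  have h2 : (0:ℝ) ≤ (n : ℝ) ^ (1 + γ (lastOcc Γ n ω) ω) :=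
    Real.rpow_nonneg (Nat.cast_nonneg _) _
  positivity

lemma measurable_pB {m0 : MeasurableSpace Ω} (𝒢 : Filtration ℕ m0) {γ : ℕ → Ω → ℝ}
    (hγa : Adapted 𝒢 γ) {Γ : ℕ → Set Ω} (hΓ : ∀ n, MeasurableSet[𝒢 n] (Γ n)) (a : ℕ) (n : ℕ) :
    Measurable[𝒢 n] (pB γ Γ a n) := by
  have hrw : pB γ Γ a n = fun ω => ∑ k ∈ Finset.range (n+1),
      if lastOcc Γ n ω = k then (a:ℝ) * (k : ℝ) ^ (γ k ω) / (n : ℝ) ^ (1 + γ k ω) else 0 := by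
    funext ω
    rw [Finset.sum_ite_eq (Finset.range (n+1)) (lastOcc Γ n ω)]
    simp [Finset.mem_range, Nat.lt_succ_iff, lastOcc_le Γ n ω, pB]
  rw [hrw]
  apply Finset.measurable_sum
  intro k hk
  rw [Finset.mem_range, Nat.lt_succ_iff] at hk
  have hγk : Measurable[𝒢 n] (γ k) := (hγa k).mono (𝒢.mono hk) le_rfl
  apply Measurable.ite (lastOcc_level_set Γ 𝒢 hΓ n k)
  · apply Measurable.div
    · exact (measurable_const_rpow hγk (k:ℝ) (Nat.cast_nonneg k)).const_mul _
    · exact measurable_const_rpow (measurable_const.add hγk) (n:ℝ) (Nat.cast_nonneg n)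
  · exact measurable_const

lemma pB_le_qq (γ : ℕ → Ω → ℝ) (Γ : ℕ → Set Ω) {a j t N : ℕ} {ω : Ω} (ht2 : 2 ≤ t)
    (htN : t ≤ N) (hg : cc j ≤ γ t ω) (hτ : lastOcc Γ N ω = t) :
    pB γ Γ a N ω ≤ qq a j t N := by
  have ht0 : (0:ℝ) < (t:ℝ) := by
    have : 0 < t := by omega
    exact_mod_cast this
  have hN0 : (0:ℝ) < (N:ℝ) := by
    have : 0 < N := by omega
    exact_mod_cast this
  have htN' : (t:ℝ) ≤ (N:ℝ) := by exact_mod_cast htN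
  have key : ∀ e : ℝ, (t:ℝ) ^ e / (N:ℝ) ^ (1+e) = ((t:ℝ)/(N:ℝ)) ^ e / N := by
    intro e
    rw [Real.rpow_add hN0, Real.rpow_one, Real.div_rpow ht0.le hN0.le, div_div]
    rw [mul_comm]
  have hquot0 : (0:ℝ) < (t:ℝ)/(N:ℝ) := by positivity
  have hquot1 : (t:ℝ)/(N:ℝ) ≤ 1 := by
    rw [div_le_one hN0]; exact htN'
  have hexp : ((t:ℝ)/(N:ℝ)) ^ (γ t ω) ≤ ((t:ℝ)/(N:ℝ)) ^ (cc j) :=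
    Real.rpow_le_rpow_of_exponent_ge hquot0 hquot1 hg
  have hqq : qq a j t N = (a:ℝ) * ((t:ℝ) ^ (cc j) / (N:ℝ) ^ (1 + cc j)) := by
    unfold qq
    rw [Real.rpow_neg hN0.le, mul_assoc, div_eq_mul_inv]
  have hpB : pB γ Γ a N ω = (a:ℝ) * ((t:ℝ) ^ (γ t ω) / (N:ℝ) ^ (1 + γ t ω)) := by
    unfold pB
    rw [hτ, mul_div_assoc]
  rw [hpB, hqq, key, key]
  apply mul_le_mul_of_nonneg_left _ (Nat.cast_nonneg a)
  exact div_le_div_of_nonneg_right hexp hN0.le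


/-! ### The sets and processes -/

variable {m0 : MeasurableSpace Ω} (μ : Measure Ω) (𝒢 : Filtration ℕ m0)
  (γ : ℕ → Ω → ℝ) (Γ : ℕ → Set Ω)

/-- The conditional probability process. -/
noncomputable def condP (n : ℕ) : Ω → ℝ :=
  μ[(Γ (n+1)).indicator (fun _ => (1:ℝ)) | 𝒢 n]

/-- The good set where the conditional probability bound holds at time `n`. -/
def Dset (a n : ℕ) : Set Ω := {ω | condP μ 𝒢 Γ n ω ≤ pB γ Γ a n ω}

/-- Occurrence at time `t` together with `γ_t ≥ c_j`. -/
def Hset (j t : ℕ) : Set Ω := Γ t ∩ {ω | cc j ≤ γ t ω}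

/-- All the bound-sets hold from `t` to `k`. -/
def CD (a t k : ℕ) : Set Ω := ⋂ i ∈ Finset.Icc t k, Dset μ 𝒢 γ Γ a i

open scoped Classical in
/-- The multiplicative increment of the submartingale. -/
noncomputable def rr (a j t k : ℕ) (ω : Ω) : ℝ :=
  if ω ∈ CD μ 𝒢 γ Γ a t k then
    (1 - (Γ (k+1)).indicator (fun _ => (1:ℝ)) ω) / (1 - qq a j t k)
  else 1

/-- The submartingale. -/
noncomputable def ZZ (a j t N : ℕ) (ω : Ω) : ℝ :=
  (Hset γ Γ j t).indicator (fun _ => (1:ℝ)) ω * ∏ k ∈ Finset.Ico t N, rr μ 𝒢 γ Γ a j t k ω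

variable {μ 𝒢 γ Γ}

lemma measurableSet_Dset (hγa : Adapted 𝒢 γ) (hΓ : ∀ n, MeasurableSet[𝒢 n] (Γ n)) (a n : ℕ) :
    MeasurableSet[𝒢 n] (Dset μ 𝒢 γ Γ a n) :=
  measurableSet_le stronglyMeasurable_condExp.measurable (measurable_pB 𝒢 hγa hΓ a n)

lemma measurableSet_Hset (hγa : Adapted 𝒢 γ) (hΓ : ∀ n, MeasurableSet[𝒢 n] (Γ n)) (j t : ℕ) :
    MeasurableSet[𝒢 t] (Hset γ Γ j t) :=
  (hΓ t).inter (measurableSet_le measurable_const (hγa t))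

lemma measurableSet_CD (hγa : Adapted 𝒢 γ) (hΓ : ∀ n, MeasurableSet[𝒢 n] (Γ n)) (a t k : ℕ) :
    MeasurableSet[𝒢 k] (CD μ 𝒢 γ Γ a t k) := by
  apply MeasurableSet.biInter (Finset.countable_toSet _)
  intro i hi
  exact (𝒢.mono (Finset.mem_Icc.mp hi).2) _ (measurableSet_Dset hγa hΓ a i)

lemma measurable_rr (hγa : Adapted 𝒢 γ) (hΓ : ∀ n, MeasurableSet[𝒢 n] (Γ n)) (a j t k : ℕ) :
    Measurable[𝒢 (k+1)] (rr μ 𝒢 γ Γ a j t k) := by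
  unfold rr
  apply Measurable.ite ((𝒢.mono (Nat.le_succ k)) _ (measurableSet_CD hγa hΓ a t k))
  · apply Measurable.div_const
    apply Measurable.const_sub
    exact measurable_const.indicator (hΓ (k+1))
  · exact measurable_const

lemma measurable_ZZ (hγa : Adapted 𝒢 γ) (hΓ : ∀ n, MeasurableSet[𝒢 n] (Γ n))
    {a j t N : ℕ} (htN : t ≤ N) : Measurable[𝒢 N] (ZZ μ 𝒢 γ Γ a j t N) := by
  unfold ZZ
  apply Measurable.mul
  · exact measurable_const.indicator ((𝒢.mono htN) _ (measurableSet_Hset hγa hΓ j t))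
  · apply Finset.measurable_prod
    intro k hk
    rw [Finset.mem_Ico] at hk
    exact (measurable_rr hγa hΓ a j t k).mono (𝒢.mono hk.2) le_rfl

/-! ### Pointwise bounds on `rr` and `ZZ` -/

lemma indicator_one_nonneg (S : Set Ω) (ω : Ω) : (0:ℝ) ≤ S.indicator (fun _ => (1:ℝ)) ω :=
  Set.indicator_nonneg (fun _ _ => zero_le_one) ω

lemma indicator_one_le_one (S : Set Ω) (ω : Ω) : S.indicator (fun _ => (1:ℝ)) ω ≤ 1 := by
  by_cases h : ω ∈ S <;> simp [h]

lemma rr_nonneg {a j t k : ℕ} (ht2 : 2 ≤ t) (hta : 2*a ≤ t) (htk : t ≤ k) (ω : Ω) :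
    0 ≤ rr μ 𝒢 γ Γ a j t k ω := by
  unfold rr
  split
  · apply div_nonneg _ (le_of_lt (one_sub_qq_pos ht2 hta htk))
    linarith [indicator_one_le_one (Ω := Ω) (Γ (k+1)) ω]
  · exact zero_le_one

lemma rr_le {a j t k : ℕ} (ht2 : 2 ≤ t) (hta : 2*a ≤ t) (htk : t ≤ k) (ω : Ω) :
    rr μ 𝒢 γ Γ a j t k ω ≤ (1 - qq a j t k)⁻¹ := by
  have hpos := one_sub_qq_pos (j := j) ht2 hta htk
  unfold rr
  split
  · rw [div_eq_mul_inv]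
    apply mul_le_of_le_one_left (le_of_lt (inv_pos.mpr hpos))
    linarith [indicator_one_nonneg (Ω := Ω) (Γ (k+1)) ω]
  · have h1 : 1 - qq a j t k ≤ 1 := by linarith [qq_nonneg a j t k]
    have hi := inv_pos.mpr hpos
    nlinarith [mul_inv_cancel₀ (ne_of_gt hpos)]

lemma ZZ_nonneg {a j t N : ℕ} (ht2 : 2 ≤ t) (hta : 2*a ≤ t) (ω : Ω) :
    0 ≤ ZZ μ 𝒢 γ Γ a j t N ω := by
  unfold ZZ
  apply mul_nonneg (indicator_one_nonneg _ ω)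
  apply Finset.prod_nonneg
  intro k hk
  exact rr_nonneg ht2 hta (Finset.mem_Ico.mp hk).1 ω

lemma ZZ_le {a j t N : ℕ} (ht2 : 2 ≤ t) (hta : 2*a ≤ t) (ω : Ω) :
    ZZ μ 𝒢 γ Γ a j t N ω ≤ (dd a j)⁻¹ := by
  have h1 : ZZ μ 𝒢 γ Γ a j t N ω ≤ ∏ k ∈ Finset.Ico t N, (1 - qq a j t k)⁻¹ := by
    unfold ZZ
    calc (Hset γ Γ j t).indicator (fun _ => (1:ℝ)) ω * ∏ k ∈ Finset.Ico t N, rr μ 𝒢 γ Γ a j t k ω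
        ≤ 1 * ∏ k ∈ Finset.Ico t N, rr μ 𝒢 γ Γ a j t k ω := by
          apply mul_le_mul_of_nonneg_right (indicator_one_le_one _ ω)
          apply Finset.prod_nonneg
          intro k hk
          exact rr_nonneg ht2 hta (Finset.mem_Ico.mp hk).1 ω
      _ = ∏ k ∈ Finset.Ico t N, rr μ 𝒢 γ Γ a j t k ω := one_mul _
      _ ≤ ∏ k ∈ Finset.Ico t N, (1 - qq a j t k)⁻¹ := by
          apply Finset.prod_le_prod
          · intro k hk; exact rr_nonneg ht2 hta (Finset.mem_Ico.mp hk).1 ω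
          · intro k hk; exact rr_le ht2 hta (Finset.mem_Ico.mp hk).1 ω
  have h2 : ∏ k ∈ Finset.Ico t N, (1 - qq a j t k)⁻¹ = (∏ k ∈ Finset.Ico t N, (1 - qq a j t k))⁻¹ := by
    rw [← Finset.prod_inv_distrib]
  have h3 : (∏ k ∈ Finset.Ico t N, (1 - qq a j t k))⁻¹ ≤ (dd a j)⁻¹ := by
    apply inv_anti₀ (dd_pos a j)
    exact prod_one_sub_qq ht2 hta N
  rw [h2] at h1
  linarith

lemma CD_anti {a t k k' : ℕ} (h : k ≤ k') : CD μ 𝒢 γ Γ a t k' ⊆ CD μ 𝒢 γ Γ a t k := by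
  intro ω hω
  simp only [CD, Set.mem_iInter] at hω ⊢
  intro i hi
  rw [Finset.mem_Icc] at hi
  exact hω i (Finset.mem_Icc.mpr ⟨hi.1, hi.2.trans h⟩)

lemma ZZ_succ {a j t N : ℕ} (htN : t ≤ N) (ω : Ω) :
    ZZ μ 𝒢 γ Γ a j t (N+1) ω = ZZ μ 𝒢 γ Γ a j t N ω * rr μ 𝒢 γ Γ a j t N ω := by
  unfold ZZ
  rw [Finset.prod_Ico_succ_top htN, mul_assoc]

/-- If `Z_N ω ≠ 0` then `ω ∈ H`, and if moreover all `D_i`, `t ≤ i ≤ N` hold at `ω`,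
the last occurrence up to `N` is exactly `t`. -/
lemma lastOcc_of_ZZ_ne_zero {a j t N : ℕ} {ω : Ω} (htN : t ≤ N)
    (hZ : ZZ μ 𝒢 γ Γ a j t N ω ≠ 0) (hCD : ω ∈ CD μ 𝒢 γ Γ a t N) :
    lastOcc Γ N ω = t := by
  unfold ZZ at hZ
  rcases mul_ne_zero_iff.mp hZ with ⟨hind, hprod⟩
  have hH : ω ∈ Hset γ Γ j t := by
    by_contra hc
    rw [Set.indicator_of_notMem hc] at hind
    exact hind rfl
  rw [Finset.prod_ne_zero_iff] at hprod
  apply lastOcc_eq_of Γ hH.1 htN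
  intro i hti hiN hmem
  have hk : i - 1 ∈ Finset.Ico t N := Finset.mem_Ico.mpr ⟨by omega, by omega⟩
  have := hprod _ hk
  have hik : i = (i-1) + 1 := by omega
  have hCDk : ω ∈ CD μ 𝒢 γ Γ a t (i-1) := CD_anti (by omega) hCD
  unfold rr at this
  rw [if_pos hCDk] at this
  rw [hik] at hmem
  rw [Set.indicator_of_mem hmem] at this
  simp at this

lemma mem_Hset_of_ZZ_ne_zero {a j t N : ℕ} {ω : Ω}
    (hZ : ZZ μ 𝒢 γ Γ a j t N ω ≠ 0) : ω ∈ Hset γ Γ j t := by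
  unfold ZZ at hZ
  rcases mul_ne_zero_iff.mp hZ with ⟨hind, _⟩
  by_contra hc
  rw [Set.indicator_of_notMem hc] at hind
  exact hind rfl


/-! ### Integrability helpers -/

lemma integrable_of_bound [IsFiniteMeasure μ] {f : Ω → ℝ} (hf : AEStronglyMeasurable f μ)
    (C : ℝ) (h : ∀ ω, |f ω| ≤ C) : Integrable f μ :=
  (integrable_const C).mono' hf (ae_of_all _ (by simpa [Real.norm_eq_abs] using h))

lemma integrable_indicator_one [IsFiniteMeasure μ] {S : Set Ω} (hS : MeasurableSet S) :
    Integrable (S.indicator (fun _ => (1:ℝ))) μ :=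
  integrable_of_bound (μ := μ) (measurable_const.indicator hS).aestronglyMeasurable 1
    (fun ω => abs_le.mpr ⟨by linarith [indicator_one_nonneg (Ω := Ω) S ω], indicator_one_le_one S ω⟩)

lemma integrable_ZZ [IsFiniteMeasure μ] (hγa : Adapted 𝒢 γ) (hΓ : ∀ n, MeasurableSet[𝒢 n] (Γ n))
    {a j t N : ℕ} (ht2 : 2 ≤ t) (hta : 2*a ≤ t) (htN : t ≤ N) :
    Integrable (ZZ μ 𝒢 γ Γ a j t N) μ := by
  apply integrable_of_bound (μ := μ)
    (((measurable_ZZ hγa hΓ htN).mono (𝒢.le N) le_rfl).aestronglyMeasurable) ((dd a j)⁻¹)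
  intro ω
  rw [abs_le]
  constructor
  · have h1 := ZZ_nonneg (μ := μ) (𝒢 := 𝒢) (γ := γ) (Γ := Γ) (N := N) (j := j) ht2 hta ω
    have h2 : (0:ℝ) < (dd a j)⁻¹ := inv_pos.mpr (dd_pos a j)
    linarith
  · exact ZZ_le ht2 hta ω

/-! ### The one-step submartingale inequality -/

lemma step [IsProbabilityMeasure μ] (hγa : Adapted 𝒢 γ) (hΓ : ∀ n, MeasurableSet[𝒢 n] (Γ n))
    {a j t : ℕ} (ht2 : 2 ≤ t) (hta : 2*a ≤ t) {N : ℕ} (htN : t ≤ N) :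
    ZZ μ 𝒢 γ Γ a j t N ≤ᵐ[μ] μ[ZZ μ 𝒢 γ Γ a j t (N+1) | 𝒢 N] := by
  classical
  have hq_pos : (0:ℝ) < 1 - qq a j t N := one_sub_qq_pos ht2 hta htN
  set C : Set Ω := CD μ 𝒢 γ Γ a t N with hC
  set Z : Ω → ℝ := ZZ μ 𝒢 γ Γ a j t N with hZ
  set u : Ω → ℝ := C.indicator (fun ω => Z ω * (1 - qq a j t N)⁻¹) with hu
  set v : Ω → ℝ := fun ω => (1:ℝ) - (Γ (N+1)).indicator (fun _ => (1:ℝ)) ω with hv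
  set w : Ω → ℝ := Cᶜ.indicator Z with hw
  have hCm : MeasurableSet[𝒢 N] C := measurableSet_CD hγa hΓ a t N
  have hZm : Measurable[𝒢 N] Z := measurable_ZZ hγa hΓ htN
  have hZ_nonneg : ∀ ω, 0 ≤ Z ω := fun ω => ZZ_nonneg ht2 hta ω
  have hZ_le : ∀ ω, Z ω ≤ (dd a j)⁻¹ := fun ω => ZZ_le ht2 hta ω
  have hu_sm : StronglyMeasurable[𝒢 N] u :=
    ((hZm.mul_const _).indicator hCm).stronglyMeasurable
  have hw_sm : StronglyMeasurable[𝒢 N] w :=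
    (hZm.indicator hCm.compl).stronglyMeasurable
  have hu_bd : ∀ ω, |u ω| ≤ (dd a j)⁻¹ * (1 - qq a j t N)⁻¹ := by
    intro ω
    rw [hu]
    rcases Classical.em (ω ∈ C) with hc | hc
    · rw [Set.indicator_of_mem hc]
      rw [abs_of_nonneg (mul_nonneg (hZ_nonneg ω) (le_of_lt (inv_pos.mpr hq_pos)))]
      exact mul_le_mul_of_nonneg_right (hZ_le ω) (le_of_lt (inv_pos.mpr hq_pos))
    · rw [Set.indicator_of_notMem hc]
      simp only [abs_zero]
      exact mul_nonneg (inv_nonneg.mpr (le_of_lt (dd_pos a j)))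
        (inv_nonneg.mpr (le_of_lt hq_pos))
  have hv_bd : ∀ ω, |v ω| ≤ 1 := by
    intro ω
    show |1 - (Γ (N+1)).indicator (fun _ => (1:ℝ)) ω| ≤ 1
    rw [abs_le]
    constructor
    · linarith [indicator_one_le_one (Ω := Ω) (Γ (N+1)) ω]
    · linarith [indicator_one_nonneg (Ω := Ω) (Γ (N+1)) ω]
  have hv_m : Measurable[𝒢 (N+1)] v :=
    (measurable_const.indicator (hΓ (N+1))).const_sub 1
  have hint_v : Integrable v μ :=
    integrable_of_bound (μ := μ) ((hv_m.mono (𝒢.le (N+1)) le_rfl).aestronglyMeasurable) 1 hv_bd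
  have hint_u : Integrable u μ :=
    integrable_of_bound (μ := μ)
      ((hu_sm.measurable.mono (𝒢.le N) le_rfl).aestronglyMeasurable) _ hu_bd
  have hint_uv : Integrable (u * v) μ := by
    apply integrable_of_bound (μ := μ)
      (((hu_sm.measurable.mono (𝒢.le N) le_rfl).mul
        (hv_m.mono (𝒢.le (N+1)) le_rfl)).aestronglyMeasurable)
      ((dd a j)⁻¹ * (1 - qq a j t N)⁻¹)
    intro ω
    rw [Pi.mul_apply, abs_mul]
    calc |u ω| * |v ω| ≤ |u ω| * 1 := mul_le_mul_of_nonneg_left (hv_bd ω) (abs_nonneg _)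
      _ = |u ω| := mul_one _
      _ ≤ _ := hu_bd ω
  have hint_w : Integrable w μ := by
    apply integrable_of_bound (μ := μ)
      ((hw_sm.measurable.mono (𝒢.le N) le_rfl).aestronglyMeasurable) ((dd a j)⁻¹)
    intro ω
    rw [hw]
    rcases Classical.em (ω ∈ Cᶜ) with hc | hc
    · rw [Set.indicator_of_mem hc, abs_of_nonneg (hZ_nonneg ω)]
      exact hZ_le ω
    · rw [Set.indicator_of_notMem hc]
      simp only [abs_zero]
      exact inv_nonneg.mpr (le_of_lt (dd_pos a j))
  have hdecomp : ZZ μ 𝒢 γ Γ a j t (N+1) = u * v + w := by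
    funext ω
    rw [ZZ_succ htN ω]
    rcases Classical.em (ω ∈ C) with hc | hc
    · have hrr : rr μ 𝒢 γ Γ a j t N ω
          = (1 - (Γ (N+1)).indicator (fun _ => (1:ℝ)) ω) / (1 - qq a j t N) := by
        unfold rr; rw [if_pos hc]
      simp only [Pi.add_apply, Pi.mul_apply, hu, hw, Set.indicator_of_mem hc,
        Set.indicator_of_notMem (Set.notMem_compl_iff.mpr hc), hrr, hv]
      rw [div_eq_mul_inv]
      ring
    · have hrr : rr μ 𝒢 γ Γ a j t N ω = 1 := by
        unfold rr; rw [if_neg hc]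
      simp only [Pi.add_apply, Pi.mul_apply, hu, hw, Set.indicator_of_notMem hc,
        Set.indicator_of_mem (Set.mem_compl hc), hrr]
      ring
  have hce1 : μ[ZZ μ 𝒢 γ Γ a j t (N+1)|𝒢 N] =ᵐ[μ] μ[u * v|𝒢 N] + μ[w|𝒢 N] := by
    rw [hdecomp]
    exact condExp_add hint_uv hint_w _
  have hce2 : μ[u * v|𝒢 N] =ᵐ[μ] u * μ[v|𝒢 N] :=
    condExp_mul_of_stronglyMeasurable_left hu_sm hint_uv hint_v
  have hce3 : μ[w|𝒢 N] = w :=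
    condExp_of_stronglyMeasurable (𝒢.le N) hw_sm hint_w
  have hce4 : μ[v|𝒢 N] =ᵐ[μ] fun ω => 1 - condP μ 𝒢 Γ N ω := by
    have hv_eq : v = (fun _ => (1:ℝ)) - (Γ (N+1)).indicator (fun _ => (1:ℝ)) := by
      funext ω; simp [hv]
    rw [hv_eq]
    have h1 := condExp_sub (m := 𝒢 N) (μ := μ) (integrable_const (1:ℝ))
      (integrable_indicator_one (μ := μ) ((𝒢.le (N+1)) _ (hΓ (N+1))))
    have h2 : μ[(fun _ => (1:ℝ))|𝒢 N] = fun _ => (1:ℝ) := condExp_const (𝒢.le N) 1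
    filter_upwards [h1] with ω hω
    rw [hω]
    simp only [Pi.sub_apply, h2, condP]
  filter_upwards [hce1, hce2, hce4] with ω h1 h2 h4
  rw [h1]
  simp only [Pi.add_apply]
  rw [h2, hce3]
  simp only [Pi.mul_apply]
  rw [h4]
  rcases Classical.em (ω ∈ C) with hc | hc
  · have hwω : w ω = 0 := Set.indicator_of_notMem (Set.notMem_compl_iff.mpr hc) _
    have huω : u ω = Z ω * (1 - qq a j t N)⁻¹ := Set.indicator_of_mem hc _
    rcases eq_or_ne (Z ω) 0 with hZ0 | hZ0
    · rw [hZ0] at huω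
      rw [huω, hwω, hZ0]
      simp
    · have hZpos : 0 < Z ω := lt_of_le_of_ne (hZ_nonneg ω) (Ne.symm hZ0)
      have hH := mem_Hset_of_ZZ_ne_zero (a := a) (j := j) (t := t) (N := N) hZ0
      have hlast := lastOcc_of_ZZ_ne_zero htN hZ0 hc
      have hDN : ω ∈ Dset μ 𝒢 γ Γ a N := by
        have : N ∈ Finset.Icc t N := Finset.mem_Icc.mpr ⟨htN, le_rfl⟩
        exact Set.mem_iInter₂.mp hc N this
      have hcond : condP μ 𝒢 Γ N ω ≤ qq a j t N :=
        le_trans hDN (pB_le_qq γ Γ ht2 htN hH.2 hlast)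
      rw [huω, hwω]
      have hkey : 1 ≤ (1 - qq a j t N)⁻¹ * (1 - condP μ 𝒢 Γ N ω) := by
        rw [← div_eq_inv_mul, le_div_iff₀ hq_pos]
        linarith
      nlinarith
  · have hwω : w ω = Z ω := Set.indicator_of_mem (Set.mem_compl hc) _
    have huω : u ω = 0 := Set.indicator_of_notMem hc _
    rw [huω, hwω]
    simp

/-! ### Tower property iteration -/

lemma tower [IsProbabilityMeasure μ] (hγa : Adapted 𝒢 γ) (hΓ : ∀ n, MeasurableSet[𝒢 n] (Γ n))
    {a j t : ℕ} (ht2 : 2 ≤ t) (hta : 2*a ≤ t) {N : ℕ} (htN : t ≤ N) :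
    (Hset γ Γ j t).indicator (fun _ => (1:ℝ)) ≤ᵐ[μ] μ[ZZ μ 𝒢 γ Γ a j t N | 𝒢 t] := by
  induction N, htN using Nat.le_induction with
  | base =>
    have hZt : ZZ μ 𝒢 γ Γ a j t t = (Hset γ Γ j t).indicator (fun _ => (1:ℝ)) := by
      funext ω; unfold ZZ; rw [Finset.Ico_self, Finset.prod_empty, mul_one]
    rw [hZt, condExp_of_stronglyMeasurable (𝒢.le t)
      ((measurable_const.indicator (measurableSet_Hset hγa hΓ j t)).stronglyMeasurable)
      (integrable_indicator_one ((𝒢.le t) _ (measurableSet_Hset hγa hΓ j t)))]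
  | succ N hN ih =>
    have h1 := step (μ := μ) hγa hΓ ht2 hta hN (j := j)
    have h2 : μ[ZZ μ 𝒢 γ Γ a j t N|𝒢 t] ≤ᵐ[μ] μ[μ[ZZ μ 𝒢 γ Γ a j t (N+1)|𝒢 N]|𝒢 t] :=
      condExp_mono (integrable_ZZ hγa hΓ ht2 hta hN) integrable_condExp h1
    have h3 : μ[μ[ZZ μ 𝒢 γ Γ a j t (N+1)|𝒢 N]|𝒢 t] =ᵐ[μ] μ[ZZ μ 𝒢 γ Γ a j t (N+1)|𝒢 t] :=
      condExp_condExp_of_le (𝒢.mono hN) (𝒢.le N)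
    filter_upwards [ih, h2, h3] with ω hω1 hω2 hω3
    rw [← hω3]
    exact hω1.trans hω2


/-! ### Set integral estimates -/

lemma setIntegral_indicator_one' [IsFiniteMeasure μ] {S s : Set Ω} (hS : MeasurableSet S)
    (hs : MeasurableSet s) :
    ∫ ω in s, S.indicator (fun _ => (1:ℝ)) ω ∂μ = (μ (S ∩ s)).toReal := by
  rw [integral_indicator hS, setIntegral_const, smul_eq_mul, mul_one,
    Measure.real_def, Measure.restrict_apply hS]

lemma setint_ZZ [IsProbabilityMeasure μ] (hγa : Adapted 𝒢 γ)
    (hΓ : ∀ n, MeasurableSet[𝒢 n] (Γ n)) {a j t N : ℕ} (ht2 : 2 ≤ t) (hta : 2*a ≤ t)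
    (htN : t ≤ N) {s : Set Ω} (hs : MeasurableSet[𝒢 t] s) :
    (μ (Hset γ Γ j t ∩ s)).toReal ≤ ∫ ω in s, ZZ μ 𝒢 γ Γ a j t N ω ∂μ := by
  have hs0 : MeasurableSet s := (𝒢.le t) s hs
  have hH0 : MeasurableSet (Hset γ Γ j t) := (𝒢.le t) _ (measurableSet_Hset hγa hΓ j t)
  have h1 : ∫ ω in s, (Hset γ Γ j t).indicator (fun _ => (1:ℝ)) ω ∂μ
      ≤ ∫ ω in s, (μ[ZZ μ 𝒢 γ Γ a j t N|𝒢 t]) ω ∂μ := by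
    apply integral_mono_ae ((integrable_indicator_one (μ := μ) hH0).restrict)
      (integrable_condExp.restrict) (ae_restrict_of_ae (tower hγa hΓ ht2 hta htN))
  rw [setIntegral_indicator_one' hH0 hs0] at h1
  rwa [setIntegral_condExp (𝒢.le t) (integrable_ZZ hγa hΓ ht2 hta htN) hs] at h1

/-! ### The limit sets -/

def NoOcc (Γ : ℕ → Set Ω) (t N : ℕ) : Set Ω := {ω | ∀ k, t ≤ k → k < N → ω ∉ Γ (k+1)}

variable (μ 𝒢 γ Γ) in
def Eset (a m : ℕ) : Set Ω := {ω | ∀ n, m ≤ n → ω ∈ Dset μ 𝒢 γ Γ a n}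

def Aset (Γ : ℕ → Set Ω) : Set Ω := {ω | {n | ω ∈ Γ n}.Finite}

variable (μ 𝒢 γ Γ) in
def Wset (a m : ℕ) : Set Ω := (Eset μ 𝒢 γ Γ a m)ᶜ ∪ Aset Γ

lemma measurableSet_NoOcc (hΓ : ∀ n, MeasurableSet[𝒢 n] (Γ n)) (t N : ℕ) :
    MeasurableSet (NoOcc Γ t N) := by
  have : NoOcc Γ t N = ⋂ (k : ℕ) (_ : t ≤ k) (_ : k < N), (Γ (k+1))ᶜ := by
    ext ω; simp [NoOcc]
  rw [this]
  exact MeasurableSet.iInter fun k => MeasurableSet.iInter fun _ =>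
    MeasurableSet.iInter fun _ => ((𝒢.le (k+1)) _ (hΓ (k+1))).compl

lemma measurableSet_Eset_iSup (hγa : Adapted 𝒢 γ) (hΓ : ∀ n, MeasurableSet[𝒢 n] (Γ n))
    (a m : ℕ) : MeasurableSet[⨆ n, 𝒢 n] (Eset μ 𝒢 γ Γ a m) := by
  have : Eset μ 𝒢 γ Γ a m = ⋂ (n : ℕ) (_ : m ≤ n), Dset μ 𝒢 γ Γ a n := by
    ext ω; simp [Eset]
  rw [this]
  exact MeasurableSet.iInter fun n => MeasurableSet.iInter fun _ =>
    ((le_iSup (fun k => (𝒢 k : MeasurableSpace Ω)) n) _ (measurableSet_Dset hγa hΓ a n))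

lemma measurableSet_Aset_iSup (hΓ : ∀ n, MeasurableSet[𝒢 n] (Γ n)) :
    MeasurableSet[⨆ n, 𝒢 n] (Aset Γ) := by
  have : Aset Γ = ⋃ (T : ℕ), ⋂ (n : ℕ) (_ : T < n), (Γ n)ᶜ := by
    ext ω
    simp only [Aset, Set.mem_setOf_eq, Set.mem_iUnion, Set.mem_iInter, Set.mem_compl_iff]
    constructor
    · intro hfin
      obtain ⟨T, hT⟩ := hfin.bddAbove
      exact ⟨T, fun n hn hmem => absurd (hT hmem) (by omega)⟩
    · intro ⟨T, hT⟩
      apply Set.Finite.subset (Set.finite_Iic T)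
      intro n hn
      simp only [Set.mem_Iic]
      by_contra hc
      exact hT n (by omega) hn
  rw [this]
  exact MeasurableSet.iUnion fun T => MeasurableSet.iInter fun n => MeasurableSet.iInter fun _ =>
    ((le_iSup (fun k => (𝒢 k : MeasurableSpace Ω)) n) _ (hΓ n)).compl

lemma measurableSet_Wset_iSup (hγa : Adapted 𝒢 γ) (hΓ : ∀ n, MeasurableSet[𝒢 n] (Γ n))
    (a m : ℕ) : MeasurableSet[⨆ n, 𝒢 n] (Wset μ 𝒢 γ Γ a m) :=
  (measurableSet_Eset_iSup hγa hΓ a m).compl.union (measurableSet_Aset_iSup hΓ)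

lemma measurableSet_Wset (hγa : Adapted 𝒢 γ) (hΓ : ∀ n, MeasurableSet[𝒢 n] (Γ n))
    (a m : ℕ) : MeasurableSet (Wset μ 𝒢 γ Γ a m) :=
  (iSup_le (fun n => 𝒢.le n) : (⨆ n, 𝒢 n) ≤ m0) _ (measurableSet_Wset_iSup hγa hΓ a m)

/-! ### The key conditional estimate -/

lemma ae_le_of_forall_setIntegral_le {m : MeasurableSpace Ω} (hm : m ≤ m0) {f h : Ω → ℝ}
    (hf_sm : StronglyMeasurable[m] f) (hh_sm : StronglyMeasurable[m] h)
    (hfi : Integrable f μ) (hhi : Integrable h μ)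
    (hle : ∀ s, MeasurableSet[m] s → ∫ ω in s, f ω ∂μ ≤ ∫ ω in s, h ω ∂μ) : f ≤ᵐ[μ] h := by
  set s := {ω | h ω < f ω} with hs_def
  have hs : MeasurableSet[m] s := measurableSet_lt hh_sm.measurable hf_sm.measurable
  have hs0 : MeasurableSet[m0] s := hm s hs
  have hint : ∫ ω in s, (f ω - h ω) ∂μ ≤ 0 := by
    rw [integral_sub (hfi.restrict) (hhi.restrict)]
    linarith [hle s hs]
  have hnonneg : 0 ≤ᵐ[μ.restrict s] fun ω => f ω - h ω := by
    filter_upwards [ae_restrict_mem hs0] with ω hω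
    have h1 : h ω < f ω := hω
    simp only [Pi.zero_apply]
    linarith
  have hzero : ∫ ω in s, (f ω - h ω) ∂μ = 0 :=
    le_antisymm hint (integral_nonneg_of_ae hnonneg)
  have hae0 : (fun ω => f ω - h ω) =ᵐ[μ.restrict s] 0 :=
    (integral_eq_zero_iff_of_nonneg_ae hnonneg ((hfi.sub hhi).restrict)).mp hzero
  have hμs : μ s = 0 := by
    have h1 : μ.restrict s {ω | ¬ (f ω - h ω = 0)} = 0 := by
      have h2 := hae0
      rw [EventuallyEq, ae_iff] at h2
      simpa using h2
    have h2 : s ⊆ {ω | ¬ (f ω - h ω = 0)} := by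
      intro ω hω
      have h3 : h ω < f ω := hω
      simp only [Set.mem_setOf_eq]
      intro hc
      linarith [sub_eq_zero.mp hc]
    have h4 : (μ.restrict s) s = μ s := by
      rw [Measure.restrict_apply hs0, Set.inter_self]
    have h5 : μ s ≤ 0 := by
      calc μ s = (μ.restrict s) s := h4.symm
        _ ≤ μ.restrict s {ω | ¬ (f ω - h ω = 0)} := measure_mono h2
        _ = 0 := h1
    exact le_antisymm h5 (zero_le)
  rw [EventuallyLE, ae_iff]
  have : {ω | ¬ f ω ≤ h ω} = s := by
    ext ω; simp [hs_def, not_le]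
  rw [this]
  exact hμs

lemma key [IsProbabilityMeasure μ] (hγa : Adapted 𝒢 γ) (hΓ : ∀ n, MeasurableSet[𝒢 n] (Γ n))
    {a j m t : ℕ} (ht2 : 2 ≤ t) (hta : 2*a ≤ t) (htm : m ≤ t) :
    (fun ω => dd a j * (Hset γ Γ j t).indicator (fun _ => (1:ℝ)) ω) ≤ᵐ[μ]
      μ[(Wset μ 𝒢 γ Γ a m).indicator (fun _ => (1:ℝ)) | 𝒢 t] := by
  classical
  have hW0 : MeasurableSet (Wset μ 𝒢 γ Γ a m) := measurableSet_Wset hγa hΓ a m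
  have hH0 : MeasurableSet (Hset γ Γ j t) := (𝒢.le t) _ (measurableSet_Hset hγa hΓ j t)
  -- Step A : set-integral inequality
  have stepA : ∀ s : Set Ω, MeasurableSet[𝒢 t] s →
      dd a j * (μ (Hset γ Γ j t ∩ s)).toReal ≤ (μ (Wset μ 𝒢 γ Γ a m ∩ s)).toReal := by
    intro s hs
    have hs0 : MeasurableSet s := (𝒢.le t) s hs
    have hEc : MeasurableSet ((Eset μ 𝒢 γ Γ a m)ᶜ) :=
      ((iSup_le (fun n => 𝒢.le n) : (⨆ n, 𝒢 n) ≤ m0) _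
        (measurableSet_Eset_iSup hγa hΓ a m)).compl
    have hBN : ∀ N : ℕ, MeasurableSet ((((Eset μ 𝒢 γ Γ a m)ᶜ ∪ NoOcc Γ t N) ∩ s)) :=
      fun N => (hEc.union (measurableSet_NoOcc hΓ t N)).inter hs0
    have hA : ∀ N, t ≤ N → dd a j * (μ (Hset γ Γ j t ∩ s)).toReal ≤
        (μ (((Eset μ 𝒢 γ Γ a m)ᶜ ∪ NoOcc Γ t N) ∩ s)).toReal := by
      intro N htN
      have hptwise : ∀ ω, dd a j * ZZ μ 𝒢 γ Γ a j t N ω ≤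
          (((Eset μ 𝒢 γ Γ a m)ᶜ ∪ NoOcc Γ t N)).indicator (fun _ => (1:ℝ)) ω := by
        intro ω
        rcases Classical.em (ω ∈ (Eset μ 𝒢 γ Γ a m)ᶜ ∪ NoOcc Γ t N) with hc | hc
        · rw [Set.indicator_of_mem hc]
          calc dd a j * ZZ μ 𝒢 γ Γ a j t N ω ≤ dd a j * (dd a j)⁻¹ :=
                mul_le_mul_of_nonneg_left (ZZ_le ht2 hta ω) (le_of_lt (dd_pos a j))
            _ = 1 := mul_inv_cancel₀ (ne_of_gt (dd_pos a j))
        · rw [Set.indicator_of_notMem hc]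
          rw [Set.mem_union, not_or] at hc
          obtain ⟨hcE, hcN⟩ := hc
          rw [Set.notMem_compl_iff] at hcE
          have : ∃ k, t ≤ k ∧ k < N ∧ ω ∈ Γ (k+1) := by
            by_contra hno
            push_neg at hno
            exact hcN (fun k hk1 hk2 hmem => hno k hk1 hk2 hmem)
          obtain ⟨k, hk1, hk2, hk3⟩ := this
          have hCDk : ω ∈ CD μ 𝒢 γ Γ a t k := by
            simp only [CD, Set.mem_iInter]
            intro i hi
            exact hcE i (le_trans htm (Finset.mem_Icc.mp hi).1)
          have hrrk : rr μ 𝒢 γ Γ a j t k ω = 0 := by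
            unfold rr
            rw [if_pos hCDk, Set.indicator_of_mem hk3]
            simp
          have hZ0 : ZZ μ 𝒢 γ Γ a j t N ω = 0 := by
            unfold ZZ
            rw [Finset.prod_eq_zero (Finset.mem_Ico.mpr ⟨hk1, hk2⟩) hrrk, mul_zero]
          rw [hZ0, mul_zero]
      have h1 : dd a j * (μ (Hset γ Γ j t ∩ s)).toReal ≤
          dd a j * ∫ ω in s, ZZ μ 𝒢 γ Γ a j t N ω ∂μ :=
        mul_le_mul_of_nonneg_left (setint_ZZ hγa hΓ ht2 hta htN hs) (le_of_lt (dd_pos a j))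
      have h2 : dd a j * ∫ ω in s, ZZ μ 𝒢 γ Γ a j t N ω ∂μ
          = ∫ ω in s, dd a j * ZZ μ 𝒢 γ Γ a j t N ω ∂μ := by
        rw [integral_const_mul]
      have h3 : ∫ ω in s, dd a j * ZZ μ 𝒢 γ Γ a j t N ω ∂μ ≤
          ∫ ω in s, (((Eset μ 𝒢 γ Γ a m)ᶜ ∪ NoOcc Γ t N)).indicator (fun _ => (1:ℝ)) ω ∂μ := by
        apply integral_mono_ae
        · exact ((integrable_ZZ hγa hΓ ht2 hta htN).const_mul _).restrict
        · exact (integrable_indicator_one (μ := μ)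
            (hEc.union (measurableSet_NoOcc hΓ t N))).restrict
        · exact ae_of_all _ hptwise
      rw [setIntegral_indicator_one' (hEc.union (measurableSet_NoOcc hΓ t N)) hs0] at h3
      linarith
    -- pass to the limit in N
    have hanti : Antitone (fun N => (((Eset μ 𝒢 γ Γ a m)ᶜ ∪ NoOcc Γ t N) ∩ s)) := by
      intro N N' hNN'
      apply Set.inter_subset_inter_left
      apply Set.union_subset_union_right
      intro ω hω k hk1 hk2
      exact hω k hk1 (by omega)
    have hlim := tendsto_measure_iInter_atTop (μ := μ) (fun N => (hBN N).nullMeasurableSet) hanti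
      ⟨0, measure_ne_top μ _⟩
    have hsub : (⋂ N, (((Eset μ 𝒢 γ Γ a m)ᶜ ∪ NoOcc Γ t N) ∩ s)) ⊆
        Wset μ 𝒢 γ Γ a m ∩ s := by
      intro ω hω
      rw [Set.mem_iInter] at hω
      have hωs : ω ∈ s := (hω t).2
      rcases Classical.em (ω ∈ (Eset μ 𝒢 γ Γ a m)ᶜ) with hE | hE
      · exact ⟨Set.mem_union_left _ hE, hωs⟩
      · have hNoAll : ∀ N, ω ∈ NoOcc Γ t N := by
          intro N
          rcases (hω N).1 with h | h
          · exact absurd h hE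
          · exact h
        have hfin : {n | ω ∈ Γ n}.Finite := by
          apply Set.Finite.subset (Set.finite_Iic t)
          intro n hn
          simp only [Set.mem_Iic]
          by_contra hc
          push_neg at hc
          have hn1 : n - 1 ≥ t := by omega
          have := hNoAll (n+1) (n-1) hn1 (by omega)
          rw [show (n-1)+1 = n by omega] at this
          exact this hn
        exact ⟨Set.mem_union_right _ hfin, hωs⟩
    have hofreal : ∀ N, t ≤ N → ENNReal.ofReal (dd a j * (μ (Hset γ Γ j t ∩ s)).toReal)
        ≤ μ (((Eset μ 𝒢 γ Γ a m)ᶜ ∪ NoOcc Γ t N) ∩ s) := by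
      intro N htN
      rw [ENNReal.ofReal_le_iff_le_toReal (measure_ne_top μ _)]
      exact hA N htN
    have hlimle : ENNReal.ofReal (dd a j * (μ (Hset γ Γ j t ∩ s)).toReal)
        ≤ μ (⋂ N, (((Eset μ 𝒢 γ Γ a m)ᶜ ∪ NoOcc Γ t N) ∩ s)) :=
      ge_of_tendsto hlim (eventually_atTop.mpr ⟨t, hofreal⟩)
    have hfinal : ENNReal.ofReal (dd a j * (μ (Hset γ Γ j t ∩ s)).toReal)
        ≤ μ (Wset μ 𝒢 γ Γ a m ∩ s) := le_trans hlimle (measure_mono hsub)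
    have hnn : 0 ≤ dd a j * (μ (Hset γ Γ j t ∩ s)).toReal := by
      apply mul_nonneg (le_of_lt (dd_pos a j)) ENNReal.toReal_nonneg
    calc dd a j * (μ (Hset γ Γ j t ∩ s)).toReal
        = (ENNReal.ofReal (dd a j * (μ (Hset γ Γ j t ∩ s)).toReal)).toReal := by
          rw [ENNReal.toReal_ofReal hnn]
      _ ≤ (μ (Wset μ 𝒢 γ Γ a m ∩ s)).toReal :=
          ENNReal.toReal_mono (measure_ne_top μ _) hfinal
  -- Step B : conclude the a.e. inequality
  apply ae_le_of_forall_setIntegral_le (𝒢.le t)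
  · exact ((measurable_const.indicator (measurableSet_Hset hγa hΓ j t)).const_mul
      (dd a j)).stronglyMeasurable
  · exact stronglyMeasurable_condExp
  · apply integrable_of_bound (μ := μ)
      (((measurable_const.indicator hH0).const_mul (dd a j)).aestronglyMeasurable) (dd a j)
    intro ω
    rw [abs_mul, abs_of_pos (dd_pos a j)]
    calc dd a j * |(Hset γ Γ j t).indicator (fun _ => (1:ℝ)) ω| ≤ dd a j * 1 := by
          apply mul_le_mul_of_nonneg_left _ (le_of_lt (dd_pos a j))
          rw [abs_le]
          exact ⟨by linarith [indicator_one_nonneg (Ω := Ω) (Hset γ Γ j t) ω],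
            indicator_one_le_one _ ω⟩
      _ = dd a j := mul_one _
  · exact integrable_condExp
  · intro s hs
    have hs0 : MeasurableSet s := (𝒢.le t) s hs
    rw [setIntegral_condExp (𝒢.le t) (integrable_indicator_one (μ := μ) hW0) hs]
    rw [integral_const_mul, setIntegral_indicator_one' hH0 hs0,
      setIntegral_indicator_one' hW0 hs0]
    exact stepA s hs

/-! ### Lévy's upward theorem applied to `Wset` -/

lemma levy [IsProbabilityMeasure μ] (hγa : Adapted 𝒢 γ) (hΓ : ∀ n, MeasurableSet[𝒢 n] (Γ n))
    (a m : ℕ) :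
    ∀ᵐ ω ∂μ, Tendsto
      (fun n => (μ[(Wset μ 𝒢 γ Γ a m).indicator (fun _ => (1:ℝ))|𝒢 n]) ω) atTop
      (𝓝 ((Wset μ 𝒢 γ Γ a m).indicator (fun _ => (1:ℝ)) ω)) :=
  Integrable.tendsto_ae_condExp
    (integrable_indicator_one (μ := μ) (measurableSet_Wset hγa hΓ a m))
    (stronglyMeasurable_const.indicator (measurableSet_Wset_iSup hγa hΓ a m))

end TarresA2

open TarresA2 in
/-- Lemma A.2 of Tarrès: if the conditional probabilities of the events `Γ_{n+1}`
are eventually bounded by `a τ_n^{γ_{τ_n}} / n^{1+γ_{τ_n}}` where `τ_n` is the last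
occurrence time, then a.s. only finitely many of the events `Γ_n` occur. -/
theorem finitely_many_occurrences
    {Ω : Type*} {m0 : MeasurableSpace Ω} (μ : Measure Ω) [IsProbabilityMeasure μ]
    (𝒢 : Filtration ℕ m0)
    (γ : ℕ → Ω → ℝ) (hγa : Adapted 𝒢 γ)
    (hγ : ∀ᵐ ω ∂μ, 0 < Filter.liminf (fun n => γ n ω) Filter.atTop)
    (Γ : ℕ → Set Ω) (hΓ : ∀ n, MeasurableSet[𝒢 n] (Γ n)) :
    ∀ᵐ ω ∂μ,
      (∃ a : ℝ, 0 < a ∧ ∃ m : ℕ, ∀ n : ℕ, m ≤ n →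
        (μ[Set.indicator (Γ (n + 1)) (fun _ => (1 : ℝ)) | 𝒢 n]) ω ≤
          a * (lastOcc Γ n ω : ℝ) ^ (γ (lastOcc Γ n ω) ω) /
            (n : ℝ) ^ (1 + γ (lastOcc Γ n ω) ω)) →
      {n : ℕ | ω ∈ Γ n}.Finite := by
  classical
  have hkey : ∀ᵐ ω ∂μ, ∀ a j m t : ℕ, 2 ≤ t → 2*a ≤ t → m ≤ t →
      dd a j * (Hset γ Γ j t).indicator (fun _ => (1:ℝ)) ω ≤
        (μ[(Wset μ 𝒢 γ Γ a m).indicator (fun _ => (1:ℝ))|𝒢 t]) ω := by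
    rw [ae_all_iff]; intro a
    rw [ae_all_iff]; intro j
    rw [ae_all_iff]; intro m
    rw [ae_all_iff]; intro t
    by_cases h : 2 ≤ t ∧ 2*a ≤ t ∧ m ≤ t
    · filter_upwards [key (μ := μ) hγa hΓ h.1 h.2.1 h.2.2 (j := j)] with ω hω
      intro _ _ _
      exact hω
    · filter_upwards with ω h1 h2 h3
      exact absurd ⟨h1, h2, h3⟩ h
  have hlevy : ∀ᵐ ω ∂μ, ∀ a m : ℕ, Tendsto
      (fun n => (μ[(Wset μ 𝒢 γ Γ a m).indicator (fun _ => (1:ℝ))|𝒢 n]) ω) atTop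
      (𝓝 ((Wset μ 𝒢 γ Γ a m).indicator (fun _ => (1:ℝ)) ω)) := by
    rw [ae_all_iff]; intro a
    rw [ae_all_iff]; intro m
    exact levy hγa hΓ a m
  filter_upwards [hkey, hlevy, hγ] with ω hk hl hlim
  rintro ⟨a₀, ha₀, m₀, hbound⟩
  by_contra hinf
  -- choose the index `j` such that eventually `γ_n ω ≥ cc j`
  rw [Filter.liminf_eq] at hlim
  have hSne : {b : ℝ | ∀ᶠ n in atTop, b ≤ γ n ω}.Nonempty := by
    by_contra hc
    rw [Set.not_nonempty_iff_eq_empty] at hc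
    rw [hc, Real.sSup_empty] at hlim
    exact lt_irrefl 0 hlim
  obtain ⟨b, hbS, hb0⟩ := exists_lt_of_lt_csSup hSne hlim
  obtain ⟨j, hj⟩ := exists_nat_one_div_lt hb0
  have hev : ∀ᶠ n in atTop, cc j ≤ γ n ω := by
    filter_upwards [hbS] with n hn
    have : cc j < b := by
      unfold cc
      exact hj
    linarith
  obtain ⟨M, hM⟩ := eventually_atTop.mp hev
  -- choose the natural coefficient `a`
  set a : ℕ := max 1 (Nat.ceil a₀) with ha_def
  have ha : a₀ ≤ (a:ℝ) := by
    refine le_trans (Nat.le_ceil a₀) ?_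
    exact_mod_cast le_max_right 1 (Nat.ceil a₀)
  -- ω belongs to the good set
  have hE : ω ∈ Eset μ 𝒢 γ Γ a m₀ := by
    intro n hn
    show condP μ 𝒢 Γ n ω ≤ pB γ Γ a n ω
    have h1 := hbound n hn
    have hX : (0:ℝ) ≤ (lastOcc Γ n ω : ℝ) ^ (γ (lastOcc Γ n ω) ω) :=
      Real.rpow_nonneg (Nat.cast_nonneg _) _
    calc condP μ 𝒢 Γ n ω
        ≤ a₀ * (lastOcc Γ n ω : ℝ) ^ (γ (lastOcc Γ n ω) ω) /
            (n : ℝ) ^ (1 + γ (lastOcc Γ n ω) ω) := h1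
      _ ≤ (a:ℝ) * (lastOcc Γ n ω : ℝ) ^ (γ (lastOcc Γ n ω) ω) /
            (n : ℝ) ^ (1 + γ (lastOcc Γ n ω) ω) :=
          div_le_div_of_nonneg_right (mul_le_mul_of_nonneg_right ha hX)
            (Real.rpow_nonneg (Nat.cast_nonneg _) _)
  have hW : ω ∉ Wset μ 𝒢 γ Γ a m₀ := by
    rw [Wset, Set.mem_union]
    push_neg
    exact ⟨Set.notMem_compl_iff.mpr hE, hinf⟩
  have hind0 : (Wset μ 𝒢 γ Γ a m₀).indicator (fun _ => (1:ℝ)) ω = 0 :=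
    Set.indicator_of_notMem hW _
  have htend := hl a m₀
  rw [hind0] at htend
  have hev2 : ∀ᶠ t in atTop,
      (μ[(Wset μ 𝒢 γ Γ a m₀).indicator (fun _ => (1:ℝ))|𝒢 t]) ω < dd a j :=
    htend.eventually_lt_const (dd_pos a j)
  obtain ⟨T₁, hT₁⟩ := eventually_atTop.mp hev2
  -- pick a large occurrence time
  set R := max (max 2 (2*a)) (max m₀ (max M T₁)) with hR_def
  have hbig : ∃ t, R ≤ t ∧ ω ∈ Γ t := by
    by_contra hc
    push_neg at hc
    apply hinf
    apply Set.Finite.subset (Set.finite_Iio R)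
    intro n hn
    simp only [Set.mem_Iio]
    by_contra hc2
    push_neg at hc2
    exact absurd hn (by simpa using (hc n hc2))
  obtain ⟨t, htR, htmem⟩ := hbig
  have hHt : ω ∈ Hset γ Γ j t :=
    ⟨htmem, hM t (le_trans (le_trans (le_max_left M T₁) (le_max_right m₀ _)) (le_trans (le_max_right _ _) htR))⟩
  have hkt := hk a j m₀ t
    (le_trans (le_trans (le_max_left 2 (2*a)) (le_max_left _ _)) htR)
    (le_trans (le_trans (le_max_right 2 (2*a)) (le_max_left _ _)) htR)
    (le_trans (le_trans (le_max_left m₀ _) (le_max_right _ _)) htR)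
  rw [Set.indicator_of_mem hHt, mul_one] at hkt
  have hlt := hT₁ t
    (le_trans (le_trans (le_max_right M T₁) (le_max_right m₀ _)) (le_trans (le_max_right _ _) htR))
  linarith
end

section
/- For the vertex-reinforced random walk (X_n) on ℤ and any site x, the three events Υ(x) = {Y_∞(x) < ∞}, Υ⁺(x) = {Y⁺_∞(x) < ∞}, and Υ⁻(x) = {Y⁻_∞(x) < ∞} coincide almost surely. -/
/-!
Given `ℱ_n`, the walk at `x` steps to `x ± 1` with probability
`Z_n(x ± 1) / (Z_n(x - 1) + Z_n(x + 1))`, so the conditional expectation of the `n`-th summand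
of `Y^±(x)` is the `n`-th summand of `Y(x)`. Both summands lie in `[0, 1]`, hence the difference
of the partial sums is a martingale with bounded increments; such a martingale is a.s. bounded
above iff it is bounded below (Lévy's extension of the Borel–Cantelli lemma), so the two series
of nonnegative terms diverge together.
-/

open MeasureTheory Filter

noncomputable def Znum {Ω : Type*} (X : ℕ → Ω → ℤ) (n : ℕ) (v : ℤ) (ω : Ω) : ℝ :=
  1 + ∑ i ∈ Finset.range (n + 1), if X i ω = v then (1 : ℝ) else 0

/-- `Y_n(x)`: weighted number of visits to `x` up to time `n`. -/
noncomputable def Ynum {Ω : Type*} (X : ℕ → Ω → ℤ) (n : ℕ) (x : ℤ) (ω : Ω) : ℝ :=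
  ∑ k ∈ Finset.Icc 1 n,
    (if X (k - 1) ω = x then (1 : ℝ) else 0) /
      (Znum X (k - 1) (x - 1) ω + Znum X (k - 1) (x + 1) ω)

/-- `Y⁺_n(x)`: weighted number of crossings from `x` to `x+1` up to time `n`. -/
noncomputable def Yplus {Ω : Type*} (X : ℕ → Ω → ℤ) (n : ℕ) (x : ℤ) (ω : Ω) : ℝ :=
  ∑ k ∈ Finset.Icc 1 n,
    (if X (k - 1) ω = x ∧ X k ω = x + 1 then (1 : ℝ) else 0) / Znum X (k - 1) (x + 1) ω

/-- `Y⁻_n(x)`: weighted number of crossings from `x` to `x-1` up to time `n`. -/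
noncomputable def Yminus {Ω : Type*} (X : ℕ → Ω → ℤ) (n : ℕ) (x : ℤ) (ω : Ω) : ℝ :=
  ∑ k ∈ Finset.Icc 1 n,
    (if X (k - 1) ω = x ∧ X k ω = x - 1 then (1 : ℝ) else 0) / Znum X (k - 1) (x - 1) ω

/-- The event `Υ(x) = {Y_∞(x) < ∞}` (the sums `Y_n(x)` are nondecreasing in `n`,
so finiteness of the limit is boundedness). -/
def Upsilon {Ω : Type*} (X : ℕ → Ω → ℤ) (x : ℤ) : Set Ω :=
  {ω | BddAbove (Set.range fun n => Ynum X n x ω)}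

/-- The event `Υ⁺(x) = {Y⁺_∞(x) < ∞}`. -/
def UpsilonPlus {Ω : Type*} (X : ℕ → Ω → ℤ) (x : ℤ) : Set Ω :=
  {ω | BddAbove (Set.range fun n => Yplus X n x ω)}

/-- The event `Υ⁻(x) = {Y⁻_∞(x) < ∞}`. -/
def UpsilonMinus {Ω : Type*} (X : ℕ → Ω → ℤ) (x : ℤ) : Set Ω :=
  {ω | BddAbove (Set.range fun n => Yminus X n x ω)}

/-- `α⁻_n(y) = Z_n(y-1)/(Z_n(y-1) + Z_n(y+1))`. -/
noncomputable def alphaMinus {Ω : Type*} (X : ℕ → Ω → ℤ) (n : ℕ) (y : ℤ) (ω : Ω) : ℝ :=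
  Znum X n (y - 1) ω / (Znum X n (y - 1) ω + Znum X n (y + 1) ω)

/-- `(X_n)` is a vertex-reinforced random walk on `ℤ` started at `v0`:
it is adapted, starts at `v0`, a.s. makes nearest-neighbor steps, and the
conditional law of each step is proportional to the augmented occupations of
the two neighbors. -/
structure IsVRRW {Ω : Type*} {m0 : MeasurableSpace Ω} (μ : Measure Ω)
    (ℱ : Filtration ℕ m0) (X : ℕ → Ω → ℤ) (v0 : ℤ) : Prop where
  adapted : Adapted ℱ X
  init : ∀ ω, X 0 ω = v0
  nearest : ∀ n, ∀ᵐ ω ∂μ, X (n + 1) ω = X n ω + 1 ∨ X (n + 1) ω = X n ω - 1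
  step : ∀ n, ∀ᵐ ω ∂μ, ∀ x : ℤ,
    (μ[Set.indicator {ω' | X (n + 1) ω' = x} (fun _ => (1 : ℝ)) | ℱ n]) ω =
      if x = X n ω + 1 ∨ x = X n ω - 1 then
        Znum X n x ω / (Znum X n (X n ω - 1) ω + Znum X n (X n ω + 1) ω)
      else 0

open ProbabilityTheory Finset
open scoped NNReal

theorem Monotone.bddAbove_range_iff_not_tendsto_atTop {α : Type*} [LinearOrder α] [NoMaxOrder α]
    {u : ℕ → α} (hu : Monotone u) : BddAbove (Set.range u) ↔ ¬Tendsto u atTop atTop :=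
  ⟨fun hb ht => not_bddAbove_of_tendsto_atTop ht hb,
    fun ht => by_contra fun hb => ht (tendsto_atTop_atTop_of_monotone' hu hb)⟩

theorem monotone_sum_range_of_nonneg {a : ℕ → ℝ} (ha : ∀ n, 0 ≤ a n) :
    Monotone fun n => ∑ k ∈ range n, a k :=
  monotone_nat_of_le_succ fun n => by simpa [sum_range_succ] using ha n

theorem sum_Icc_one_eq_sum_range {M : Type*} [AddCommMonoid M] (f : ℕ → M) (n : ℕ) :
    ∑ k ∈ Icc 1 n, f k = ∑ k ∈ range n, f (k + 1) := by
  rw [range_eq_Ico, sum_Ico_add' f 0 n 1]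
  rfl

section

variable {Ω : Type*} {m0 : MeasurableSpace Ω} {μ : Measure Ω} {ℱ : Filtration ℕ m0}

/-- Lévy's conditional Borel–Cantelli lemma, for bounded nonnegative increments. -/
theorem ae_bddAbove_sum_iff_of_condExp_ae_eq [IsFiniteMeasure μ] {c v : ℕ → Ω → ℝ} {R : ℝ≥0}
    (hc : ∀ n, StronglyMeasurable[ℱ (n + 1)] (c n)) (hc0 : ∀ n ω, 0 ≤ c n ω)
    (hcR : ∀ n ω, c n ω ≤ R) (hcv : ∀ n, μ[c n | ℱ n] =ᵐ[μ] v n) :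
    ∀ᵐ ω ∂μ, BddAbove (Set.range fun n => ∑ k ∈ range n, c k ω) ↔
      BddAbove (Set.range fun n => ∑ k ∈ range n, v k ω) := by
  let f : ℕ → Ω → ℝ := fun n => ∑ k ∈ range n, c k
  have hf_succ (n : ℕ) : f (n + 1) - f n = c n := sum_range_succ_sub_sum c
  have hf_adapted : StronglyAdapted ℱ f := fun n =>
    Finset.stronglyMeasurable_sum _ fun k hk => (hc k).mono (ℱ.mono (mem_range.1 hk))
  have hc_int (n : ℕ) : Integrable (c n) μ :=
    .of_bound ((hc n).mono (ℱ.le _)).aestronglyMeasurable R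
      (ae_of_all _ fun ω => (Real.norm_of_nonneg (hc0 n ω)).trans_le (hcR n ω))
  have hlevy := tendsto_sum_indicator_atTop_iff (μ := μ) (R := R)
    (ae_of_all _ fun ω n => sub_nonneg.1 (by rw [← Pi.sub_apply, hf_succ]; exact hc0 n ω))
    hf_adapted (fun n => integrable_finsetSum' _ fun k _ => hc_int k)
    (ae_of_all _ fun ω n => by
      rw [← Pi.sub_apply, hf_succ, abs_of_nonneg (hc0 n ω)]
      exact hcR n ω)
  have hv0 : ∀ᵐ ω ∂μ, ∀ n, 0 ≤ (μ[c n | ℱ n]) ω :=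
    ae_all_iff.2 fun n => condExp_nonneg (ae_of_all _ (hc0 n))
  filter_upwards [hlevy, hv0, ae_all_iff.2 hcv] with ω hlevyω hv0ω hcvω
  have hpred (n : ℕ) : predictablePart f ℱ μ n ω = ∑ k ∈ range n, v k ω := by
    simp only [predictablePart, hf_succ, Finset.sum_apply, hcvω]
  simp only [hpred, f, Finset.sum_apply] at hlevyω
  rw [(monotone_sum_range_of_nonneg (hc0 · ω)).bddAbove_range_iff_not_tendsto_atTop,
    (monotone_sum_range_of_nonneg fun n => hcvω n ▸ hv0ω n).bddAbove_range_iff_not_tendsto_atTop,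
    hlevyω]

noncomputable def visitWeight (X : ℕ → Ω → ℤ) (x : ℤ) (n : ℕ) (ω : Ω) : ℝ :=
  (if X n ω = x then 1 else 0) / (Znum X n (x - 1) ω + Znum X n (x + 1) ω)

noncomputable def crossingWeight (X : ℕ → Ω → ℤ) (x y : ℤ) (n : ℕ) (ω : Ω) : ℝ :=
  (if X n ω = x ∧ X (n + 1) ω = y then 1 else 0) / Znum X n y ω

variable {X : ℕ → Ω → ℤ}

theorem Ynum_eq_sum_visitWeight (n : ℕ) (x : ℤ) (ω : Ω) :
    Ynum X n x ω = ∑ k ∈ range n, visitWeight X x k ω := by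
  simp [Ynum, sum_Icc_one_eq_sum_range, visitWeight]

theorem Yplus_eq_sum_crossingWeight (n : ℕ) (x : ℤ) (ω : Ω) :
    Yplus X n x ω = ∑ k ∈ range n, crossingWeight X x (x + 1) k ω := by
  simp [Yplus, sum_Icc_one_eq_sum_range, crossingWeight]

theorem Yminus_eq_sum_crossingWeight (n : ℕ) (x : ℤ) (ω : Ω) :
    Yminus X n x ω = ∑ k ∈ range n, crossingWeight X x (x - 1) k ω := by
  simp [Yminus, sum_Icc_one_eq_sum_range, crossingWeight]

theorem one_le_Znum (n : ℕ) (v : ℤ) (ω : Ω) : 1 ≤ Znum X n v ω :=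
  le_add_of_nonneg_right (sum_nonneg fun _ _ => by positivity)

theorem crossingWeight_nonneg (x y : ℤ) (n : ℕ) (ω : Ω) : 0 ≤ crossingWeight X x y n ω :=
  div_nonneg (by positivity) (zero_le_one.trans (one_le_Znum n y ω))

theorem crossingWeight_le_one (x y : ℤ) (n : ℕ) (ω : Ω) : crossingWeight X x y n ω ≤ 1 :=
  div_le_one_of_le₀ (by split_ifs <;> linarith [one_le_Znum (X := X) n y ω])
    (zero_le_one.trans (one_le_Znum n y ω))

theorem measurableSet_eq_of_adapted (hX : Adapted ℱ X) {i n : ℕ} (hin : i ≤ n) (v : ℤ) :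
    MeasurableSet[ℱ n] {ω | X i ω = v} :=
  (hX i).mono (ℱ.mono hin) le_rfl (measurableSet_singleton v)

theorem measurable_Znum (hX : Adapted ℱ X) (n : ℕ) (v : ℤ) : Measurable[ℱ n] (Znum X n v) :=
  measurable_const.add <| Finset.measurable_sum _ fun _ hi =>
    Measurable.ite (measurableSet_eq_of_adapted hX (Nat.lt_succ_iff.1 (mem_range.1 hi)) v)
      measurable_const measurable_const

theorem stronglyMeasurable_crossingWeight (hX : Adapted ℱ X) (x y : ℤ) (n : ℕ) :
    StronglyMeasurable[ℱ (n + 1)] (crossingWeight X x y n) :=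
  (Measurable.div
    (Measurable.ite ((measurableSet_eq_of_adapted hX n.le_succ x).inter
      (measurableSet_eq_of_adapted hX le_rfl y)) measurable_const measurable_const)
    ((measurable_Znum hX n y).mono (ℱ.mono n.le_succ) le_rfl)).stronglyMeasurable

theorem condExp_crossingWeight_ae_eq [IsFiniteMeasure μ] {v0 : ℤ} (h : IsVRRW μ ℱ X v0) {x y : ℤ}
    (hy : y = x + 1 ∨ y = x - 1) (n : ℕ) :
    μ[crossingWeight X x y n | ℱ n] =ᵐ[μ] visitWeight X x n := by
  set g : Ω → ℝ := Set.indicator {ω | X (n + 1) ω = y} (fun _ => 1)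
  set f : Ω → ℝ := fun ω => (if X n ω = x then 1 else 0) / Znum X n y ω
  have hfg : crossingWeight X x y n = f * g := by
    ext ω
    by_cases hx : X n ω = x <;> by_cases hnext : X (n + 1) ω = y <;>
      simp [crossingWeight, f, g, hx, hnext]
  have hf : StronglyMeasurable[ℱ n] f :=
    ((Measurable.ite (measurableSet_eq_of_adapted h.adapted le_rfl x) measurable_const
      measurable_const).div (measurable_Znum h.adapted n y)).stronglyMeasurable
  have hg : Integrable g μ :=
    (integrable_const 1).indicator (ℱ.le _ _ (measurableSet_eq_of_adapted h.adapted le_rfl y))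
  have hfg_int : Integrable (f * g) μ :=
    hfg ▸ .of_bound ((stronglyMeasurable_crossingWeight h.adapted x y n).mono
      (ℱ.le _)).aestronglyMeasurable 1 (ae_of_all _ fun ω => by
        rw [Real.norm_of_nonneg (crossingWeight_nonneg x y n ω)]
        exact crossingWeight_le_one x y n ω)
  rw [hfg]
  filter_upwards [condExp_mul_of_stronglyMeasurable_left hf hfg_int hg, h.step n]
    with ω hpull hstep
  rw [hpull, Pi.mul_apply, hstep y]
  by_cases hx : X n ω = x
  · subst hx
    have hZ := (zero_lt_one.trans_le (one_le_Znum (X := X) n y ω)).ne'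
    simp only [f, visitWeight, if_pos hy, if_true]
    field_simp
  · simp [f, visitWeight, hx]

end

/-- Lemma 2.1 of Tarrès: for the VRRW on `ℤ`, the events `Υ(x)`, `Υ⁺(x)` and
`Υ⁻(x)` coincide almost surely. -/
theorem upsilon_eq_upsilonPlus_eq_upsilonMinus
    {Ω : Type*} {m0 : MeasurableSpace Ω} (μ : Measure Ω) [IsProbabilityMeasure μ]
    (ℱ : Filtration ℕ m0) (X : ℕ → Ω → ℤ) (v0 : ℤ) (h : IsVRRW μ ℱ X v0) (x : ℤ) :
    ∀ᵐ ω ∂μ, (ω ∈ Upsilon X x ↔ ω ∈ UpsilonPlus X x) ∧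
      (ω ∈ Upsilon X x ↔ ω ∈ UpsilonMinus X x) := by
  have key {y : ℤ} (hy : y = x + 1 ∨ y = x - 1) :=
    ae_bddAbove_sum_iff_of_condExp_ae_eq (R := 1) (stronglyMeasurable_crossingWeight h.adapted x y)
      (crossingWeight_nonneg x y) (crossingWeight_le_one x y) (condExp_crossingWeight_ae_eq h hy)
  filter_upwards [key (Or.inl rfl), key (Or.inr rfl)] with ω hplus hminus
  simp only [Upsilon, UpsilonPlus, UpsilonMinus, Set.mem_ofPred_eq, Ynum_eq_sum_visitWeight,
    Yplus_eq_sum_crossingWeight, Yminus_eq_sum_crossingWeight]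
  exact ⟨hplus.symm, hminus.symm⟩
end

section
/- For the VRRW on ℤ and any x ∈ ℤ, almost surely ln Z_n(x) - (Y^+_n(x-1) + Y^-_n(x+1)) is eventually constant up to an error O(Z_n(x)^{-1}); i.e., the logarithm of the occupation of x is the sum of the weighted crossing counts into x from both sides, modulo a convergent correction. -/
open MeasureTheory Filter

/-!
At each arrival at `x` the walk comes from `x - 1` or from `x + 1`, so the two crossing sums
add up to `∑ 1 / Z_{k-1}(x)` over the arrival times `k`. Along those times `Z_{k-1}(x)` runs
through consecutive integers, so the sum is a difference of harmonic numbers, and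
`H_m = ln (m + 1) + γ + O(1 / (m + 1))`.
-/

open Finset Real

lemma abs_harmonic_sub_log_sub_eulerMascheroniConstant_le (m : ℕ) :
    |(harmonic m : ℝ) - log (m + 1) - eulerMascheroniConstant| ≤ 2 / (m + 1) := by
  have hlower : (harmonic m : ℝ) - log (m + 1) ≤ eulerMascheroniConstant :=
    (eulerMascheroniSeq_lt_eulerMascheroniConstant m).le
  have hupper : eulerMascheroniConstant - ((harmonic m : ℝ) - log (m + 1)) ≤ 2 / (m + 1) := by
    rcases Nat.eq_zero_or_pos m with rfl | hm
    · simp only [harmonic_zero, Rat.cast_zero, Nat.cast_zero, zero_add, log_one]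
      linarith [eulerMascheroniConstant_lt_two_thirds]
    have hγ := eulerMascheroniConstant_lt_eulerMascheroniSeq' m
    rw [eulerMascheroniSeq', if_neg hm.ne'] at hγ
    have hm' : (1 : ℝ) ≤ m := by exact_mod_cast hm
    have hlog : log (m + 1) - log m ≤ 1 / m := by
      rw [← log_div (by positivity) (by positivity)]
      calc log ((m + 1) / m) ≤ (m + 1) / m - 1 := log_le_sub_one_of_pos (by positivity)
        _ = 1 / m := by field_simp; ring
    have hinv : 1 / (m : ℝ) ≤ 2 / (m + 1) := by
      rw [div_le_div_iff₀ (by positivity) (by positivity)]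
      linarith
    linarith
  rw [abs_le]
  constructor <;> linarith

section Path

variable {Ω : Type*} (X : ℕ → Ω → ℤ) (ω : Ω)

def visits (n : ℕ) (v : ℤ) : ℕ := #{i ∈ range (n + 1) | X i ω = v}

lemma Znum_eq_visits_add_one (n : ℕ) (v : ℤ) : Znum X n v ω = visits X ω n v + 1 := by
  rw [Znum, visits, sum_boole, add_comm]

lemma harmonic_visits_succ (n : ℕ) (v : ℤ) :
    (harmonic (visits X ω (n + 1) v) : ℝ) =
      harmonic (visits X ω n v) + (if X (n + 1) ω = v then 1 else 0) / Znum X n v ω := by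
  have hsucc : visits X ω (n + 1) v = visits X ω n v + if X (n + 1) ω = v then 1 else 0 := by
    simp only [visits, card_filter, sum_range_succ _ (n + 1)]
  rw [hsucc, Znum_eq_visits_add_one]
  split_ifs
  · push_cast [harmonic_succ]
    ring
  · simp

lemma sum_ite_div_Znum_eq_harmonic (n : ℕ) (v : ℤ) :
    ∑ k ∈ Icc 1 n, (if X k ω = v then (1 : ℝ) else 0) / Znum X (k - 1) v ω =
      harmonic (visits X ω n v) - harmonic (visits X ω 0 v) := by
  induction n with
  | zero => simp
  | succ n ih =>
    rw [sum_Icc_succ_top (by omega), ih, harmonic_visits_succ, Nat.add_sub_cancel]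
    ring

lemma Yplus_add_Yminus_eq_sum_ite_div_Znum
    (hstep : ∀ m, X (m + 1) ω = X m ω + 1 ∨ X (m + 1) ω = X m ω - 1) (n : ℕ) (x : ℤ) :
    Yplus X n (x - 1) ω + Yminus X n (x + 1) ω =
      ∑ k ∈ Icc 1 n, (if X k ω = x then (1 : ℝ) else 0) / Znum X (k - 1) x ω := by
  rw [Yplus, Yminus, ← sum_add_distrib]
  refine sum_congr rfl fun k hk => ?_
  obtain ⟨k, rfl⟩ := Nat.exists_eq_add_of_le' (mem_Icc.mp hk).1
  rw [sub_add_cancel, add_sub_cancel_right, ← add_div, Nat.add_sub_cancel]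
  congr 1
  have := hstep k
  grind

end Path

theorem log_Z_eq_crossing_sums_general
    {Ω : Type*} {m0 : MeasurableSpace Ω} (μ : Measure Ω)
    (ℱ : Filtration ℕ m0) (X : ℕ → Ω → ℤ) (v0 : ℤ) (h : IsVRRW μ ℱ X v0) (x : ℤ) :
    ∀ᵐ ω ∂μ, ∃ c : ℝ,
      (fun n : ℕ => Real.log (Znum X n x ω) -
          (Yplus X n (x - 1) ω + Yminus X n (x + 1) ω) - c)
        =O[atTop] fun n : ℕ => (Znum X n x ω)⁻¹ := by
  filter_upwards [ae_all_iff.2 h.nearest] with ω hstep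
  refine ⟨harmonic (visits X ω 0 x) - eulerMascheroniConstant,
    Asymptotics.IsBigO.of_bound 2 (Eventually.of_forall fun n => ?_)⟩
  have hbound := abs_harmonic_sub_log_sub_eulerMascheroniConstant_le (visits X ω n x)
  rw [Yplus_add_Yminus_eq_sum_ite_div_Znum X ω hstep, sum_ite_div_Znum_eq_harmonic,
    Znum_eq_visits_add_one, norm_eq_abs, norm_inv, norm_eq_abs,
    abs_of_pos (by positivity : (0 : ℝ) < visits X ω n x + 1), ← div_eq_mul_inv, ← abs_neg]
  convert hbound using 2
  ring

/-- Proposition 3.1(b) of Tarrès: almost surely,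
`ln Z_n(x) - (Y⁺_n(x-1) + Y⁻_n(x+1))` equals a constant plus `O(Z_n(x)⁻¹)`. -/
theorem log_Z_eq_crossing_sums
    {Ω : Type*} {m0 : MeasurableSpace Ω} (μ : Measure Ω) [IsProbabilityMeasure μ]
    (ℱ : Filtration ℕ m0) (X : ℕ → Ω → ℤ) (v0 : ℤ) (h : IsVRRW μ ℱ X v0) (x : ℤ) :
    ∀ᵐ ω ∂μ, ∃ c : ℝ,
      (fun n : ℕ => Real.log (Znum X n x ω) -
          (Yplus X n (x - 1) ω + Yminus X n (x + 1) ω) - c)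
        =O[atTop] fun n : ℕ => (Znum X n x ω)⁻¹ :=
  log_Z_eq_crossing_sums_general μ ℱ X v0 h x
end

section
/- For the VRRW on ℤ and any x, the crossing sums Y^+_n(x) = ∑_{k≤n} 1_{X_{k-1}=x, X_k=x+1}/Z_{k-1}(x+1) and Ỹ^+_n(x) = ∑_{k≤n} 1_{X_{k-1}=x+1, X_k=x}/Z_{k-1}(x+1) satisfy: Y^+_n(x) - Ỹ^+_n(x) + 1_{X_n ≤ x}/Z_{n-1}(x+1) is eventually constant in n. -/
open MeasureTheory Filter

/-- `Ỹ⁺_n(x)`: weighted number of crossings from `x+1` to `x` up to time `n`,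
with weight `1/Z_{k-1}(x+1)`. -/
noncomputable def Ytildeplus {Ω : Type*} (X : ℕ → Ω → ℤ) (n : ℕ) (x : ℤ) (ω : Ω) : ℝ :=
  ∑ k ∈ Finset.Icc 1 n,
    (if X (k - 1) ω = x + 1 ∧ X k ω = x then (1 : ℝ) else 0) / Znum X (k - 1) (x + 1) ω

/-!
`Z(x+1)` only changes while the walk sits at `x+1`, where the indicator term vanishes. At an
up-crossing at time `k` the weight `1/Z_{k-1}(x+1)` moves from the indicator term into `Y⁺`; at a
down-crossing at time `k` the weight `1/Z_{k-1}(x+1)` enters both `Ỹ⁺` and the indicator term.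
Along any nearest-neighbour path the quantity is therefore constant from time `1` on.
-/

section Crossings

variable {Ω : Type*} (X : ℕ → Ω → ℤ) (x : ℤ) (ω : Ω)

lemma Znum_succ (n : ℕ) (v : ℤ) :
    Znum X (n + 1) v ω = Znum X n v ω + if X (n + 1) ω = v then 1 else 0 := by
  rw [Znum, Znum, Finset.sum_range_succ, add_assoc]

lemma Yplus_succ (n : ℕ) :
    Yplus X (n + 1) x ω = Yplus X n x ω +
      (if X n ω = x ∧ X (n + 1) ω = x + 1 then 1 else 0) / Znum X n (x + 1) ω := by
  rw [Yplus, Yplus, Finset.sum_Icc_succ_top (Nat.le_add_left 1 n)]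
  simp

lemma Ytildeplus_succ (n : ℕ) :
    Ytildeplus X (n + 1) x ω = Ytildeplus X n x ω +
      (if X n ω = x + 1 ∧ X (n + 1) ω = x then 1 else 0) / Znum X n (x + 1) ω := by
  rw [Ytildeplus, Ytildeplus, Finset.sum_Icc_succ_top (Nat.le_add_left 1 n)]
  simp

noncomputable def crossingBalance (n : ℕ) : ℝ :=
  Yplus X n x ω - Ytildeplus X n x ω +
    (if X n ω ≤ x then (1 : ℝ) else 0) / Znum X (n - 1) (x + 1) ω

lemma crossing_step_identity {a b : ℤ} (hab : b = a + 1 ∨ b = a - 1) (Z : ℝ) :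
    ((if a = x ∧ b = x + 1 then 1 else 0) - (if a = x + 1 ∧ b = x then 1 else 0) +
        (if b ≤ x then 1 else 0)) / (Z + if a = x + 1 then 1 else 0) =
      (if a ≤ x then (1 : ℝ) else 0) / Z := by
  rcases hab with rfl | rfl <;> split_ifs <;> first | omega | simp

lemma crossingBalance_succ_succ (m : ℕ)
    (hstep : X (m + 2) ω = X (m + 1) ω + 1 ∨ X (m + 2) ω = X (m + 1) ω - 1) :
    crossingBalance X x ω (m + 2) = crossingBalance X x ω (m + 1) := by
  have key := crossing_step_identity x hstep (Znum X m (x + 1) ω)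
  rw [← Znum_succ] at key
  simp only [crossingBalance, show m + 2 - 1 = m + 1 from rfl, Nat.add_sub_cancel,
    Yplus_succ X x ω (m + 1), Ytildeplus_succ X x ω (m + 1), ← key]
  ring

lemma crossingBalance_const_of_nearest
    (hnear : ∀ n, X (n + 1) ω = X n ω + 1 ∨ X (n + 1) ω = X n ω - 1) {n : ℕ} (hn : 1 ≤ n) :
    crossingBalance X x ω n = crossingBalance X x ω 1 := by
  induction n, hn using Nat.le_induction with
  | base => rfl
  | succ m hm ih =>
    obtain ⟨k, rfl⟩ := Nat.exists_eq_add_of_le' hm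
    rw [crossingBalance_succ_succ X x ω k (hnear (k + 1)), ih]

end Crossings

theorem yplus_sub_ytildeplus_eventually_constant_general
    {Ω : Type*} {m0 : MeasurableSpace Ω} (μ : Measure Ω)
    (ℱ : Filtration ℕ m0) (X : ℕ → Ω → ℤ) (v0 : ℤ) (h : IsVRRW μ ℱ X v0) (x : ℤ) :
    ∀ᵐ ω ∂μ, ∃ (N : ℕ) (c : ℝ), ∀ n : ℕ, N ≤ n →
      Yplus X n x ω - Ytildeplus X n x ω +
        (if X n ω ≤ x then (1 : ℝ) else 0) / Znum X (n - 1) (x + 1) ω = c := by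
  filter_upwards [ae_all_iff.mpr h.nearest] with ω hnear
  exact ⟨1, crossingBalance X x ω 1, fun n => crossingBalance_const_of_nearest X x ω hnear⟩

/-- First equivalence of Proposition 3.1(c) of Tarrès: almost surely,
`Y⁺_n(x) - Ỹ⁺_n(x) + 1_{X_n ≤ x}/Z_{n-1}(x+1)` is eventually constant in `n`. -/
theorem yplus_sub_ytildeplus_eventually_constant
    {Ω : Type*} {m0 : MeasurableSpace Ω} (μ : Measure Ω) [IsProbabilityMeasure μ]
    (ℱ : Filtration ℕ m0) (X : ℕ → Ω → ℤ) (v0 : ℤ) (h : IsVRRW μ ℱ X v0) (x : ℤ) :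
    ∀ᵐ ω ∂μ, ∃ (N : ℕ) (c : ℝ), ∀ n : ℕ, N ≤ n →
      Yplus X n x ω - Ytildeplus X n x ω +
        (if X n ω ≤ x then (1 : ℝ) else 0) / Znum X (n - 1) (x + 1) ω = c :=
  yplus_sub_ytildeplus_eventually_constant_general μ ℱ X v0 h x
end
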